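/- arXiv:0911.3833 — 6 statements merged into one kernel-verified Lean document; each statement's English description precedes it below -/
import Mathlib

section
/- For every family F of finite subsets of ℕ, there exists an infinite set A ⊆ ℕ such that either no finite subset of A belongs to F, or every infinite subset B of A has an initial segment (in the increasing enumeration of B) belonging to F. -/
/-!
Nash-Williams' accept/reject argument. Say that `B` accepts `s` if every infinite `C ⊆ B` has an
initial segment `t` with `s ∪ t ∈ F`, and that `A` rejects `s` if no infinite subset of `A` accepts
`s`. An infinite set accepting `∅` gives the second alternative. Otherwise `ℕ` rejects `∅`, and
rejection propagates: an infinite `A` rejecting `s` has an infinite subset `A'` rejecting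
`insert n s` for every `n ∈ A'`. Were it not so, one could pick `n₀ < n₁ < ⋯` and nested infinite
sets `Bₖ ∋ nₖ₊₁` accepting `insert nₖ s`, and then `{n₀, n₁, …} ⊆ A` would accept `s`.
Adding one element at a time while shrinking the reservoir, one builds an infinite set all of whose
finite subsets are rejected, hence none of them lies in `F`.
-/

/-- `a` is an initial segment of `B`: `a ⊆ B` and `a` consists of the first `|a|`
elements of `B` in increasing order. -/
def IsInitSeg (a : Finset ℕ) (B : Set ℕ) : Prop :=
  ↑a ⊆ B ∧ ∀ x ∈ B, x ∉ a → ∀ y ∈ a, y < x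

lemma IsInitSeg.insert_sInf {t : Finset ℕ} {E : Set ℕ} (hE : E.Nonempty)
    (ht : IsInitSeg t (E \ {sInf E})) : IsInitSeg (insert (sInf E) t) E := by
  refine ⟨?_, fun x hx hxt y hy => ?_⟩
  · rw [Finset.coe_insert]
    exact Set.insert_subset (Nat.sInf_mem hE) (ht.1.trans Set.sdiff_subset)
  · rw [Finset.mem_insert, not_or] at hxt
    rcases Finset.mem_insert.1 hy with rfl | hy
    · exact (Nat.sInf_le hx).lt_of_ne (Ne.symm hxt.1)
    · exact ht.2 x ⟨hx, hxt.1⟩ hxt.2 y hy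

namespace Galvin

def Accepts (F : Set (Finset ℕ)) (B : Set ℕ) (s : Finset ℕ) : Prop :=
  ∀ C ⊆ B, C.Infinite → ∃ t : Finset ℕ, IsInitSeg t C ∧ s ∪ t ∈ F

def Rejects (F : Set (Finset ℕ)) (A : Set ℕ) (s : Finset ℕ) : Prop :=
  ∀ B ⊆ A, B.Infinite → ¬ Accepts F B s

variable {F : Set (Finset ℕ)}

lemma accepts_of_mem {s : Finset ℕ} (hs : s ∈ F) (B : Set ℕ) : Accepts F B s :=
  fun _ _ _ => ⟨∅, ⟨by simp, by simp⟩, by simpa using hs⟩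

lemma not_rejects_iff {A : Set ℕ} {s : Finset ℕ} :
    ¬ Rejects F A s ↔ ∃ B ⊆ A, B.Infinite ∧ Accepts F B s := by
  simp [Rejects]

lemma Rejects.mono {A A' : Set ℕ} {s : Finset ℕ} (h : A' ⊆ A) (hr : Rejects F A s) :
    Rejects F A' s :=
  fun B hB => hr B (hB.trans h)

lemma accepts_range {n : ℕ → ℕ} {B : ℕ → Set ℕ} {s : Finset ℕ} (hn : StrictMono n)
    (hB : ∀ k j, k < j → n j ∈ B k) (hacc : ∀ k, Accepts F (B k) (insert (n k) s)) :
    Accepts F (Set.range n) s := by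
  intro E hE hEinf
  obtain ⟨k, hk⟩ := hE (Nat.sInf_mem hEinf.nonempty)
  have hrest : E \ {sInf E} ⊆ B k := by
    rintro _ ⟨hxE, hxm⟩
    obtain ⟨j, rfl⟩ := hE hxE
    refine hB k j (lt_of_le_of_ne (hn.le_iff_le.1 (hk ▸ Nat.sInf_le hxE)) ?_)
    rintro rfl
    exact hxm hk
  obtain ⟨t, ht, htF⟩ := hacc k _ hrest (hEinf.sdiff (Set.finite_singleton _))
  refine ⟨insert (sInf E) t, ht.insert_sInf hEinf.nonempty, ?_⟩
  rwa [← hk, Finset.union_insert, ← Finset.insert_union]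

lemma exists_diagonal_seq {A : Set ℕ} (hA : A.Infinite) {P : ℕ → Set ℕ → Prop}
    (h : ∀ C ⊆ A, C.Infinite → ∃ n ∈ C, ∃ B ⊆ C, B.Infinite ∧ P n B) :
    ∃ (n : ℕ → ℕ) (B : ℕ → Set ℕ), StrictMono n ∧ (∀ k, n k ∈ A ∧ P (n k) (B k)) ∧
      ∀ k j, k < j → n j ∈ B k := by
  choose! m hm B hBC hBinf hP using h
  set C : ℕ → Set ℕ := fun k => (fun D => B D \ Set.Iic (m D))^[k] A
  have hCsucc (k : ℕ) : C (k + 1) = B (C k) \ Set.Iic (m (C k)) :=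
    Function.iterate_succ_apply' _ _ _
  have hCgood (k : ℕ) : C k ⊆ A ∧ (C k).Infinite := by
    induction k with
    | zero => exact ⟨subset_rfl, hA⟩
    | succ k ih =>
      rw [hCsucc]
      exact ⟨Set.sdiff_subset.trans ((hBC _ ih.1 ih.2).trans ih.1),
        (hBinf _ ih.1 ih.2).sdiff (Set.finite_Iic _)⟩
  have hmC (k : ℕ) : m (C k) ∈ C k := hm _ (hCgood k).1 (hCgood k).2
  have hCB (k : ℕ) : C (k + 1) ⊆ B (C k) := hCsucc k ▸ Set.sdiff_subset
  have hCanti : Antitone C :=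
    antitone_nat_of_succ_le fun k => (hCB k).trans (hBC _ (hCgood k).1 (hCgood k).2)
  refine ⟨fun k => m (C k), fun k => B (C k), strictMono_nat_of_lt_succ fun k => ?_,
    fun k => ⟨(hCgood k).1 (hmC k), hP _ (hCgood k).1 (hCgood k).2⟩,
    fun k j hkj => hCB k (hCanti hkj (hmC j))⟩
  have hnext := hmC (k + 1)
  rw [hCsucc] at hnext ⊢
  simpa using hnext.2

theorem Rejects.exists_rejects_insert {A : Set ℕ} {s : Finset ℕ} (hA : A.Infinite)
    (hrej : Rejects F A s) : ∃ A' ⊆ A, A'.Infinite ∧ ∀ n ∈ A', Rejects F A' (insert n s) := by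
  by_contra! hcon
  have hstep (C : Set ℕ) (hCA : C ⊆ A) (hC : C.Infinite) :
      ∃ n ∈ C, ∃ B ⊆ C, B.Infinite ∧ Accepts F B (insert n s) := by
    obtain ⟨n, hn, hnrej⟩ := hcon C hCA hC
    exact ⟨n, hn, not_rejects_iff.1 hnrej⟩
  obtain ⟨n, B, hn, hnB, hB⟩ := exists_diagonal_seq hA hstep
  exact hrej (Set.range n) (Set.range_subset_iff.2 fun k => (hnB k).1)
    (Set.infinite_range_of_injective hn.injective) (accepts_range hn hB fun k => (hnB k).2)

theorem exists_rejects_insert_of_forall_mem {A : Set ℕ} (S : Finset (Finset ℕ))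
    (hA : A.Infinite) (h : ∀ s ∈ S, Rejects F A s) :
    ∃ A' ⊆ A, A'.Infinite ∧ ∀ s ∈ S, ∀ n ∈ A', Rejects F A' (insert n s) := by
  induction S using Finset.induction_on generalizing A with
  | empty => exact ⟨A, subset_rfl, hA, by simp⟩
  | insert s S _ ih =>
    obtain ⟨A₁, hA₁, hA₁inf, hS⟩ := ih hA fun s' hs' => h s' (Finset.mem_insert_of_mem hs')
    obtain ⟨A₂, hA₂, hA₂inf, hs⟩ :=
      ((h s (Finset.mem_insert_self s S)).mono hA₁).exists_rejects_insert hA₁inf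
    refine ⟨A₂, hA₂.trans hA₁, hA₂inf, fun s' hs' n hn => ?_⟩
    rcases Finset.mem_insert.1 hs' with rfl | hs'
    · exact hs n hn
    · exact (hS s' hs' n (hA₂ hn)).mono hA₂

theorem exists_rejects_subsets_insert {A : Set ℕ} {E : Finset ℕ} (hA : A.Infinite)
    (hE : ∀ s ⊆ E, Rejects F A s) :
    ∃ a ∈ A, ∃ A' ⊆ A, a ∉ A' ∧ A'.Infinite ∧ ∀ s ⊆ insert a E, Rejects F A' s := by
  obtain ⟨A₁, hA₁, hA₁inf, hins⟩ := exists_rejects_insert_of_forall_mem E.powerset hA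
    fun s hs => hE s (Finset.mem_powerset.1 hs)
  obtain ⟨a, ha⟩ := hA₁inf.nonempty
  refine ⟨a, hA₁ ha, A₁ \ {a}, Set.sdiff_subset.trans hA₁, fun h => h.2 rfl,
    hA₁inf.sdiff (Set.finite_singleton a), fun s hs => ?_⟩
  by_cases has : a ∈ s
  · rw [← Finset.insert_erase has]
    exact (hins _ (Finset.mem_powerset.2 (Finset.subset_insert_iff.1 hs)) a ha).mono
      Set.sdiff_subset
  · exact (hE s ((Finset.subset_insert_iff_of_notMem has).1 hs)).mono
      (Set.sdiff_subset.trans hA₁)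

theorem exists_seq_rejects_subsets (h : Rejects F Set.univ ∅) :
    ∃ E : ℕ → Finset ℕ, Monotone E ∧ (∀ k, (E k).card = k) ∧
      ∀ k, ∃ A : Set ℕ, A.Infinite ∧ ∀ s ⊆ E k, Rejects F A s := by
  choose! a ha A' hA'A haA' hA'inf hA'rej using
    fun (E : Finset ℕ) (A : Set ℕ) (hA : A.Infinite) (hE : ∀ s ⊆ E, Rejects F A s) =>
      exists_rejects_subsets_insert hA hE
  set p : ℕ → Finset ℕ × Set ℕ :=
    fun k => (fun q => (insert (a q.1 q.2) q.1, A' q.1 q.2))^[k] (∅, Set.univ)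
  have hpsucc (k : ℕ) :
      p (k + 1) = (insert (a (p k).1 (p k).2) (p k).1, A' (p k).1 (p k).2) :=
    Function.iterate_succ_apply' _ _ _
  have hgood (k : ℕ) : (p k).2.Infinite ∧ Disjoint (↑(p k).1 : Set ℕ) (p k).2 ∧
      ∀ s ⊆ (p k).1, Rejects F (p k).2 s := by
    induction k with
    | zero => exact ⟨Set.infinite_univ, by simp [p], fun s hs => Finset.subset_empty.1 hs ▸ h⟩
    | succ k ih =>
      obtain ⟨hinf, hdisj, hrej⟩ := ih
      rw [hpsucc, Finset.coe_insert, Set.disjoint_insert_left]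
      exact ⟨hA'inf _ _ hinf hrej,
        ⟨haA' _ _ hinf hrej, hdisj.mono_right (hA'A _ _ hinf hrej)⟩, hA'rej _ _ hinf hrej⟩
  have hnew (k : ℕ) : a (p k).1 (p k).2 ∉ (p k).1 := fun hmem =>
    Set.disjoint_left.1 (hgood k).2.1 hmem (ha _ _ (hgood k).1 (hgood k).2.2)
  have hcard (k : ℕ) : (p k).1.card = k := by
    induction k with
    | zero => rfl
    | succ k ih => rw [hpsucc, Finset.card_insert_of_notMem (hnew k), ih]
  refine ⟨fun k => (p k).1, monotone_nat_of_le_succ fun k => ?_, hcard,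
    fun k => ⟨(p k).2, (hgood k).1, (hgood k).2.2⟩⟩
  rw [hpsucc]
  exact Finset.subset_insert _ _

theorem exists_infinite_forall_notMem_of_rejects (h : Rejects F Set.univ ∅) :
    ∃ A : Set ℕ, A.Infinite ∧ ∀ a : Finset ℕ, ↑a ⊆ A → a ∉ F := by
  obtain ⟨E, hmono, hcard, hrej⟩ := exists_seq_rejects_subsets h
  refine ⟨⋃ k, ↑(E k), Set.infinite_iUnion fun j k hjk => ?_, fun a ha haF => ?_⟩
  · simpa [hcard] using congrArg Finset.card (Finset.coe_injective hjk)
  · have hdir : Directed (· ⊆ ·) fun k => (↑(E k) : Set ℕ) :=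
      Monotone.directed_le fun _ _ hjk => Finset.coe_subset.2 (hmono hjk)
    obtain ⟨k, hk⟩ := hdir.exists_mem_subset_of_finset_subset_biUnion ha
    obtain ⟨A, hA, hArej⟩ := hrej k
    exact hArej a (Finset.coe_subset.1 hk) A subset_rfl hA (accepts_of_mem haF A)

end Galvin

/-- Galvin's lemma. -/
theorem galvin_lemma (F : Set (Finset ℕ)) :
    ∃ A : Set ℕ, A.Infinite ∧
      ((∀ a : Finset ℕ, ↑a ⊆ A → a ∉ F) ∨
        (∀ B : Set ℕ, B ⊆ A → B.Infinite → ∃ a ∈ F, IsInitSeg a B)) := by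
  by_cases hrej : Galvin.Rejects F Set.univ ∅
  · obtain ⟨A, hA, hAF⟩ := Galvin.exists_infinite_forall_notMem_of_rejects hrej
    exact ⟨A, hA, Or.inl hAF⟩
  · obtain ⟨B, -, hB, hBacc⟩ := Galvin.not_rejects_iff.1 hrej
    refine ⟨B, hB, Or.inr fun C hCB hC => ?_⟩
    obtain ⟨t, ht, htF⟩ := hBacc C hCB hC
    exact ⟨t, by simpa using htF, ht⟩
end

section
/- If X is a Borel subset of the space of infinite subsets of ℕ (with the metric/product topology, identifying sets with their characteristic functions), then there exists an infinite set B ⊆ ℕ such that every infinite subset of B lies in X, or every infinite subset of B lies in the complement of X. -/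
open Classical in
/-- The characteristic function of a set of natural numbers. -/
noncomputable def chi (C : Set ℕ) : ℕ → Bool := fun n => if n ∈ C then true else false

/-!
A family `X` is completely Ramsey if every Ellentuck neighbourhood `[s, A]` shrinks to some
`[s, B]` inside `X` or inside `Xᶜ`. The accept/reject argument, run through a fusion lemma, shrinks
any `[s, A]` to a `[s, B]` that either lies in `X` or is such that no `[s ∪ t, B']` with
`t ⊆ B ⊇ B'` does. For open `X` the second case forces `[s, B] ∩ X = ∅`, since membership in `X`
is witnessed by a finite initial segment. For a countable union of completely Ramsey `Y i`, after
fusing so that `Y i` is decided on every extension that is long enough relative to `i`, the second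
case again forces `[s, B]` to miss every `Y i`. Hence the completely Ramsey families form a
σ-algebra containing the open sets; apply this at `[∅, ℕ]`.
-/

namespace GalvinPrikry

open Set

def above (s : Finset ℕ) (A : Set ℕ) : Set ℕ := {a ∈ A | ∀ x ∈ s, x < a}

/-- The Ellentuck neighbourhood `[s, A]`. -/
def ellentuck (s : Finset ℕ) (A : Set ℕ) : Set (Set ℕ) :=
  {C | C.Infinite ∧ ↑s ⊆ C ∧ C ⊆ ↑s ∪ above s A}

def Decides (X : Set (Set ℕ)) (s : Finset ℕ) (A : Set ℕ) : Prop :=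
  ellentuck s A ⊆ X ∨ ellentuck s A ⊆ Xᶜ

def CompletelyRamsey (X : Set (Set ℕ)) : Prop :=
  ∀ s A, A.Infinite → ∃ B ⊆ A, B.Infinite ∧ Decides X s B

/-- `P` is dense open in the forcing order of infinite subsets of `ℕ` under inclusion. -/
structure IsDenseOpen (P : Set ℕ → Prop) : Prop where
  mono : ∀ ⦃A B⦄, B ⊆ A → P A → P B
  exists_subset : ∀ A : Set ℕ, A.Infinite → ∃ B ⊆ A, B.Infinite ∧ P B

section Ellentuck

variable {s t : Finset ℕ} {A B C : Set ℕ}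

lemma above_subset : above s A ⊆ A := fun _ h => h.1

lemma above_mono (h : B ⊆ A) : above s B ⊆ above s A := fun _ ha => ⟨h ha.1, ha.2⟩

lemma infinite_above (hA : A.Infinite) : (above s A).Infinite := by
  obtain ⟨m, hm⟩ := s.exists_nat_subset_range
  refine (hA.sdiff (finite_Iio m)).mono fun a ha => ⟨ha.1, fun x hx => ?_⟩
  exact (Finset.mem_range.mp (hm hx)).trans_le (not_lt.mp ha.2)

lemma above_above (h : s ⊆ t) : above t (above s A) = above t A := by
  ext a
  exact ⟨fun ⟨⟨ha, _⟩, hta⟩ => ⟨ha, hta⟩, fun ⟨ha, hta⟩ => ⟨⟨ha, fun x hx => hta x (h hx)⟩, hta⟩⟩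

lemma ellentuck_mono (h : B ⊆ A) : ellentuck s B ⊆ ellentuck s A :=
  fun _ ⟨hC, hsC, hCs⟩ => ⟨hC, hsC, hCs.trans (union_subset_union_right _ (above_mono h))⟩

lemma ellentuck_above (h : s ⊆ t) : ellentuck t (above s A) = ellentuck t A := by
  simp only [ellentuck, above_above h]

lemma mem_ellentuck_empty : C ∈ ellentuck ∅ A ↔ C.Infinite ∧ C ⊆ A := by
  simp [ellentuck, above]

lemma diff_subset_above_of_mem_ellentuck (hC : C ∈ ellentuck s A) : C \ ↑s ⊆ above s A :=
  fun _ ⟨hc, hcs⟩ => (hC.2.2 hc).resolve_left hcs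

lemma exists_mem_ellentuck_insert (hC : C ∈ ellentuck s A) :
    ∃ b ∈ above s A, C ∈ ellentuck (insert b s) A := by
  have hne : (C \ ↑s).Nonempty := (hC.1.sdiff s.finite_toSet).nonempty
  set b := sInf (C \ ↑s)
  have hb : b ∈ C \ ↑s := Nat.sInf_mem hne
  refine ⟨b, diff_subset_above_of_mem_ellentuck hC hb, hC.1, ?_, fun c hc => ?_⟩
  · simpa [insert_subset_iff] using And.intro hb.1 hC.2.1
  · by_cases hcs : c ∈ insert b s
    · exact Or.inl hcs
    · have hcC : c ∈ C \ ↑s := ⟨hc, fun h => hcs (Finset.mem_insert_of_mem h)⟩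
      have hbc : b < c :=
        (Nat.sInf_le hcC).lt_of_ne fun h => hcs (h ▸ Finset.mem_insert_self b s)
      have hcA := diff_subset_above_of_mem_ellentuck hC hcC
      refine Or.inr ⟨hcA.1, fun x hx => ?_⟩
      rcases Finset.mem_insert.mp hx with rfl | hx
      · exact hbc
      · exact hcA.2 x hx

lemma mem_ellentuck_of_inter_Iio {u : Finset ℕ} {m : ℕ} (hC : C.Infinite)
    (hu : ↑u = C ∩ Iio m) (hCA : C \ Iio m ⊆ A) : C ∈ ellentuck u A := by
  refine ⟨hC, hu ▸ inter_subset_left, fun c hc => ?_⟩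
  by_cases hcm : c < m
  · exact Or.inl (hu ▸ ⟨hc, hcm⟩)
  · refine Or.inr ⟨hCA ⟨hc, hcm⟩, fun x hx => ?_⟩
    exact (hu ▸ Finset.mem_coe.mpr hx : x ∈ C ∩ Iio m).2.trans_le (not_lt.mp hcm)

lemma mem_iff_of_mem_ellentuck {u : Finset ℕ} {m : ℕ} {D : Set ℕ} (hD : D ∈ ellentuck u A)
    (hA : A ⊆ Ici m) : ∀ k < m, k ∈ D ↔ k ∈ u := fun _ hk =>
  ⟨fun hkD => (hD.2.2 hkD).resolve_right fun h => not_le.mpr hk (hA h.1), fun hku => hD.2.1 hku⟩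

lemma exists_initial_segment (hC : C ∈ ellentuck s A) {m : ℕ} (hm : ↑s ⊆ Iio m) :
    ∃ t : Finset ℕ, ↑t ⊆ A ∧ ↑(s ∪ t) = C ∩ Iio m ∧ C \ Iio m ⊆ A := by
  classical
  have hfin : (C ∩ Iio m).Finite := (finite_Iio m).subset inter_subset_right
  have hs : s ⊆ hfin.toFinset := fun x hx => hfin.mem_toFinset.mpr ⟨hC.2.1 hx, hm hx⟩
  refine ⟨hfin.toFinset \ s, fun x hx => ?_, ?_, fun c hc => ?_⟩
  · rw [Finset.coe_sdiff, hfin.coe_toFinset] at hx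
    exact (diff_subset_above_of_mem_ellentuck hC ⟨hx.1.1, hx.2⟩).1
  · rw [Finset.union_sdiff_of_subset hs, hfin.coe_toFinset]
  · exact (diff_subset_above_of_mem_ellentuck hC ⟨hc.1, fun h => hc.2 (hm h)⟩).1

end Ellentuck

namespace IsDenseOpen

lemma finset_forall {ι : Type*} {P : ι → Set ℕ → Prop} (I : Finset ι)
    (hP : ∀ i ∈ I, IsDenseOpen (P i)) : IsDenseOpen fun B => ∀ i ∈ I, P i B where
  mono _ _ hBA h i hi := (hP i hi).mono hBA (h i hi)
  exists_subset := by
    classical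
    induction I using Finset.induction_on with
    | empty => exact fun A hA => ⟨A, subset_rfl, hA, by simp⟩
    | insert j I _ ih =>
      intro A hA
      obtain ⟨B, hBA, hB, hBI⟩ := ih (fun i hi => hP i (Finset.mem_insert_of_mem hi)) A hA
      obtain ⟨B', hB'B, hB', hB'j⟩ := (hP j (Finset.mem_insert_self j I)).exists_subset B hB
      refine ⟨B', hB'B.trans hBA, hB', Finset.forall_mem_insert .. |>.mpr ⟨hB'j, fun i hi => ?_⟩⟩
      exact (hP i (Finset.mem_insert_of_mem hi)).mono hB'B (hBI i hi)

end IsDenseOpen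

/-- Fusion: `B` is the set of minima `a n` of a decreasing sequence `S n`, where the stage after
`a n` is chosen inside `P t` for all `t ⊆ {0, …, a n}` at once. -/
theorem exists_fusion (P : Finset ℕ → Set ℕ → Prop) (hP : ∀ t, IsDenseOpen (P t))
    {A : Set ℕ} (hA : A.Infinite) :
    ∃ B ⊆ A, B.Infinite ∧ ∀ t : Finset ℕ, ↑t ⊆ B → P t (above t B) := by
  have step : ∀ B : Set ℕ, B.Infinite → ∀ m, ∃ B' ⊆ B \ Iio m, B'.Infinite ∧
      ∀ t ∈ (Finset.range m).powerset, P t B' := fun B hB m =>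
    (IsDenseOpen.finset_forall _ fun t _ => hP t).exists_subset _ (hB.sdiff (finite_Iio m))
  choose! F hFsub hFinf hFP using step
  let S : ℕ → Set ℕ := fun n => Nat.rec (F A 0) (fun _ B => F B (sInf B + 1)) n
  have hS : ∀ n, (S n).Infinite := fun n => by
    induction n with
    | zero => exact hFinf A hA 0
    | succ n ih => exact hFinf (S n) ih _
  have hS_succ : ∀ n, S (n + 1) ⊆ S n \ Iio (sInf (S n) + 1) := fun n => hFsub (S n) (hS n) _
  have hS_anti : Antitone S := antitone_nat_of_succ_le fun n => (hS_succ n).trans sdiff_subset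
  set a : ℕ → ℕ := fun n => sInf (S n)
  have ha : ∀ n, a n ∈ S n := fun n => Nat.sInf_mem (hS n).nonempty
  have ha_mono : StrictMono a := strictMono_nat_of_lt_succ fun n =>
    Nat.lt_of_succ_le (not_lt.mp (hS_succ n (ha (n + 1))).2)
  refine ⟨range a, ?_, infinite_range_of_injective ha_mono.injective, fun t ht => ?_⟩
  · rintro _ ⟨n, rfl⟩
    exact hFsub A hA 0 (hS_anti n.zero_le (ha n)) |>.1
  · obtain rfl | hne := t.eq_empty_or_nonempty
    · refine (hP ∅).mono ?_ (hFP A hA 0 ∅ (by simp))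
      rintro _ ⟨⟨n, rfl⟩, -⟩
      exact hS_anti n.zero_le (ha n)
    obtain ⟨n, hn⟩ := ht (t.max'_mem hne)
    have ht_range : t ∈ (Finset.range (a n + 1)).powerset := Finset.mem_powerset.mpr
      fun x hx => Finset.mem_range_succ_iff.mpr (hn ▸ t.le_max' x hx)
    refine (hP t).mono ?_ (hFP (S n) (hS n) _ t ht_range)
    rintro _ ⟨⟨k, rfl⟩, hk⟩
    have hnk : n < k := ha_mono.lt_iff_lt.mp (hn ▸ hk _ (t.max'_mem hne))
    exact hS_anti hnk (ha k)

section AcceptReject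

variable (X : Set (Set ℕ)) {s t : Finset ℕ} {A B : Set ℕ}

def Accepts (s : Finset ℕ) (A : Set ℕ) : Prop := ellentuck s A ⊆ X

def Rejects (s : Finset ℕ) (A : Set ℕ) : Prop := ∀ B ⊆ A, B.Infinite → ¬ Accepts X s B

variable {X}

lemma Accepts.mono (h : B ⊆ A) (hA : Accepts X s A) : Accepts X s B :=
  (ellentuck_mono h).trans hA

lemma Rejects.mono (h : B ⊆ A) (hA : Rejects X s A) : Rejects X s B :=
  fun B' hB' => hA B' (hB'.trans h)

lemma isDenseOpen_accepts_or_rejects (s : Finset ℕ) :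
    IsDenseOpen fun B => Accepts X s B ∨ Rejects X s B where
  mono _ _ h := Or.imp (Accepts.mono h) (Rejects.mono h)
  exists_subset A hA := by
    by_cases h : ∃ B ⊆ A, B.Infinite ∧ Accepts X s B
    · obtain ⟨B, hBA, hB, hacc⟩ := h
      exact ⟨B, hBA, hB, .inl hacc⟩
    · exact ⟨A, subset_rfl, hA, .inr fun B hBA hB hacc => h ⟨B, hBA, hB, hacc⟩⟩

lemma accepts_above_iff (h : s ⊆ t) : Accepts X t (above s A) ↔ Accepts X t A := by
  rw [Accepts, Accepts, ellentuck_above h]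

lemma Rejects.of_above (h : s ⊆ t) (hA : Rejects X t (above s A)) : Rejects X t A :=
  fun _ hBA hB hacc =>
    hA _ (above_mono hBA) (infinite_above hB) ((accepts_above_iff h).mpr hacc)

lemma accepts_of_forall_accepts_insert {A' : Set ℕ} (hA' : A' ⊆ A)
    (h : ∀ b ∈ A', Accepts X (insert b s) A) : Accepts X s A' := fun C hC => by
  obtain ⟨b, hb, hCb⟩ := exists_mem_ellentuck_insert hC
  exact h b hb.1 (ellentuck_mono hA' hCb)

lemma finite_setOf_not_rejects_insert (hrej : Rejects X s A)
    (hdec : ∀ b ∈ above s A, Accepts X (insert b s) A ∨ Rejects X (insert b s) A) :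
    {b ∈ above s A | ¬ Rejects X (insert b s) A}.Finite := by
  by_contra hinf
  refine hrej _ (fun b hb => hb.1.1) hinf (accepts_of_forall_accepts_insert
    (fun b hb => hb.1.1) fun b hb => (hdec b hb.1).resolve_right hb.2)

/-- All but finitely many one-point extensions of a rejected stem are rejected (the others would
together accept it), so a fusion keeps only those. -/
lemma exists_forall_rejects {s₀ : Finset ℕ} (hA : A.Infinite) (hs₀ : ∀ a ∈ A, ∀ x ∈ s₀, x < a)
    (hdec : ∀ t : Finset ℕ, ↑t ⊆ A → Accepts X (s₀ ∪ t) A ∨ Rejects X (s₀ ∪ t) A)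
    (hrej : Rejects X s₀ A) :
    ∃ B ⊆ A, B.Infinite ∧ ∀ t : Finset ℕ, ↑t ⊆ B → Rejects X (s₀ ∪ t) A := by
  classical
  let Q (t : Finset ℕ) (B : Set ℕ) : Prop := ↑t ⊆ A → Rejects X (s₀ ∪ t) A →
    ∀ b ∈ B, b ∈ above (s₀ ∪ t) A → Rejects X (s₀ ∪ insert b t) A
  have hQ : ∀ t, IsDenseOpen (Q t) := fun t =>
    { mono := fun _ _ hBA h ht hrej b hb => h ht hrej b (hBA hb)
      exists_subset := fun B hB => by
        by_cases hpre : ↑t ⊆ A ∧ Rejects X (s₀ ∪ t) A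
        · have hfin := finite_setOf_not_rejects_insert hpre.2 fun b hb => by
            rw [← Finset.union_insert]
            exact hdec _ (Finset.coe_insert b t ▸ insert_subset hb.1 hpre.1)
          refine ⟨_, sdiff_subset, hB.sdiff hfin, fun _ _ b hb hbab => ?_⟩
          rw [Finset.union_insert]
          by_contra hnrej
          exact hb.2 ⟨hbab, hnrej⟩
        · exact ⟨B, subset_rfl, hB, fun h1 h2 => absurd ⟨h1, h2⟩ hpre⟩ }
  obtain ⟨B, hBA, hB, hQB⟩ := exists_fusion Q hQ hA
  refine ⟨B, hBA, hB, fun t ht => ?_⟩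
  induction t using Finset.induction_on_max with
  | empty => simpa using hrej
  | insert b t hbt ih =>
    have ht' : ↑t ⊆ B := (Finset.coe_subset.mpr (Finset.subset_insert b t)).trans ht
    have hb : b ∈ B := ht (Finset.mem_insert_self b t)
    refine hQB t ht' (ht'.trans hBA) (ih ht') b ⟨hb, hbt⟩ ⟨hBA hb, fun x hx => ?_⟩
    rcases Finset.mem_union.mp hx with hx | hx
    · exact hs₀ b (hBA hb) x hx
    · exact hbt x hx

theorem exists_accepts_or_forall_rejects (s₀ : Finset ℕ) (hA : A.Infinite) :
    ∃ B ⊆ A, B.Infinite ∧ (Accepts X s₀ B ∨ ∀ t : Finset ℕ, ↑t ⊆ B → Rejects X (s₀ ∪ t) B) := by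
  obtain ⟨B₀, hB₀A, hB₀, hdec⟩ := exists_fusion _
    (fun t => isDenseOpen_accepts_or_rejects (X := X) (s₀ ∪ t)) (infinite_above (s := s₀) hA)
  replace hdec : ∀ t : Finset ℕ, ↑t ⊆ B₀ → Accepts X (s₀ ∪ t) B₀ ∨ Rejects X (s₀ ∪ t) B₀ :=
    fun t ht => (hdec t ht).imp (accepts_above_iff Finset.subset_union_right).mp
      (Rejects.of_above Finset.subset_union_right)
  rcases hdec ∅ (by simp) with hacc | hrej
  · exact ⟨B₀, hB₀A.trans above_subset, hB₀, .inl (by simpa using hacc)⟩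
  obtain ⟨B, hBB₀, hB, hrejB⟩ :=
    exists_forall_rejects hB₀ (fun a ha => (hB₀A ha).2) hdec (by simpa using hrej)
  exact ⟨B, hBB₀.trans (hB₀A.trans above_subset), hB, .inr fun t ht => (hrejB t ht).mono hBB₀⟩

end AcceptReject

section CompletelyRamsey

variable {X : Set (Set ℕ)}

lemma CompletelyRamsey.isDenseOpen_decides (hX : CompletelyRamsey X) (s : Finset ℕ) :
    IsDenseOpen (Decides X s) where
  mono _ _ h := Or.imp (ellentuck_mono h).trans (ellentuck_mono h).trans
  exists_subset A hA := hX s A hA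

lemma CompletelyRamsey.compl (hX : CompletelyRamsey X) : CompletelyRamsey Xᶜ := fun s A hA => by
  obtain ⟨B, hBA, hB, hdec⟩ := hX s A hA
  exact ⟨B, hBA, hB, by rwa [Decides, compl_compl, or_comm]⟩

def IsCantorOpen (X : Set (Set ℕ)) : Prop :=
  ∀ C ∈ X, ∃ n, ∀ D : Set ℕ, (∀ k < n, k ∈ D ↔ k ∈ C) → D ∈ X

theorem CompletelyRamsey.of_isCantorOpen (hX : IsCantorOpen X) : CompletelyRamsey X := by
  intro s A hA
  obtain ⟨B, hBA, hB, hacc | hrej⟩ := exists_accepts_or_forall_rejects (X := X) s hA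
  · exact ⟨B, hBA, hB, .inl hacc⟩
  refine ⟨B, hBA, hB, .inr fun C hC hCX => ?_⟩
  obtain ⟨n, hn⟩ := hX C hCX
  obtain ⟨m₀, hm₀⟩ := s.exists_nat_subset_range
  set m := max n m₀
  obtain ⟨t, htB, hst, hCB⟩ := exists_initial_segment hC (m := m) fun x hx =>
    (Finset.mem_range.mp (hm₀ hx)).trans_le (le_max_right n m₀)
  -- every `D ∈ [s ∪ t, C \ [0, m)]` agrees with `C` below `m`, hence lies in `X`
  refine hrej t htB _ hCB (hC.1.sdiff (finite_Iio m)) fun D hD => hn D fun k hk => ?_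
  have hkm : k < m := hk.trans_le (le_max_left n m₀)
  rw [mem_iff_of_mem_ellentuck hD (fun _ ha => mem_Ici.mpr (not_lt.mp ha.2)) k hkm,
    ← Finset.mem_coe, hst]
  exact ⟨fun h => h.1, fun h => ⟨h, hkm⟩⟩

theorem CompletelyRamsey.iUnion {Y : ℕ → Set (Set ℕ)} (hY : ∀ i, CompletelyRamsey (Y i)) :
    CompletelyRamsey (⋃ i, Y i) := by
  intro s A hA
  obtain ⟨B₀, hB₀A, hB₀, hdec⟩ := exists_fusion
    (fun t B => ∀ i ∈ Finset.range (t.sup id + 1), Decides (Y i) (s ∪ t) B)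
    (fun t => IsDenseOpen.finset_forall _ fun i _ => (hY i).isDenseOpen_decides _) hA
  obtain ⟨B, hBB₀, hB, hacc | hrej⟩ := exists_accepts_or_forall_rejects (X := ⋃ i, Y i) s hB₀
  · exact ⟨B, hBB₀.trans hB₀A, hB, .inl hacc⟩
  refine ⟨B, hBB₀.trans hB₀A, hB, .inr fun C hC hCY => ?_⟩
  obtain ⟨i, hCi⟩ := mem_iUnion.mp hCY
  -- the initial segment must reach some `c ≥ i`, so that `Y i` is decided on it
  obtain ⟨c, hc, hic⟩ := (hC.1.sdiff s.finite_toSet).exists_gt i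
  obtain ⟨m₀, hm₀⟩ := s.exists_nat_subset_range
  obtain ⟨t, htB, hst, hCB⟩ := exists_initial_segment hC (m := max (c + 1) m₀) fun x hx =>
    (Finset.mem_range.mp (hm₀ hx)).trans_le (le_max_right _ _)
  have hct : c ∈ t := by
    have : c ∈ (↑(s ∪ t) : Set ℕ) := hst ▸ ⟨hc.1, (Nat.lt_succ_self c).trans_le (le_max_left _ _)⟩
    exact (Finset.mem_union.mp this).resolve_left hc.2
  have hCt : C ∈ ellentuck (s ∪ t) (above t B) := by
    rw [ellentuck_above Finset.subset_union_right]
    exact mem_ellentuck_of_inter_Iio hC.1 hst hCB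
  have hi : i ∈ Finset.range (t.sup id + 1) :=
    Finset.mem_range_succ_iff.mpr (hic.le.trans (Finset.le_sup (f := id) hct))
  rcases hdec t (htB.trans hBB₀) i hi with hsub | hsub
  · exact hrej t htB _ above_subset (infinite_above hB) fun D hD =>
      mem_iUnion.mpr ⟨i, hsub (ellentuck_mono (above_mono hBB₀) hD)⟩
  · exact hsub (ellentuck_mono (above_mono hBB₀) hCt) hCi

lemma isCantorOpen_preimage_chi {U : Set (ℕ → Bool)} (hU : IsOpen U) :
    IsCantorOpen (chi ⁻¹' U) := by
  intro C hC
  obtain ⟨I, u, hu, hIU⟩ := isOpen_pi_iff.mp hU (chi C) hC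
  obtain ⟨n, hn⟩ := I.exists_nat_subset_range
  refine ⟨n, fun D hD => hIU fun i hi => ?_⟩
  have : chi D i = chi C i := by simp [chi, hD i (Finset.mem_range.mp (hn hi))]
  exact this ▸ (hu i hi).2

theorem completelyRamsey_preimage_chi {U : Set (ℕ → Bool)}
    (hU : @MeasurableSet _ (borel (ℕ → Bool)) U) : CompletelyRamsey (chi ⁻¹' U) := by
  induction U, hU using MeasurableSpace.generateFrom_induction with
  | hC U hU _ => exact .of_isCantorOpen (isCantorOpen_preimage_chi hU)
  | empty => exact .of_isCantorOpen fun _ h => h.elim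
  | compl U _ ih => exact ih.compl
  | iUnion f _ ih =>
    rw [preimage_iUnion]
    exact .iUnion ih

end CompletelyRamsey

end GalvinPrikry

/-- The Galvin–Prikry theorem: Borel subsets of the space of infinite subsets of ℕ
(identified with characteristic functions in `2^ℕ` with the product topology) are Ramsey. -/
theorem galvin_prikry (X : Set (ℕ → Bool))
    (hX : @MeasurableSet (ℕ → Bool) (borel (ℕ → Bool)) X) :
    ∃ B : Set ℕ, B.Infinite ∧
      ((∀ C : Set ℕ, C ⊆ B → C.Infinite → chi C ∈ X) ∨
        (∀ C : Set ℕ, C ⊆ B → C.Infinite → chi C ∉ X)) := by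
  obtain ⟨B, -, hB, hdec⟩ :=
    GalvinPrikry.completelyRamsey_preimage_chi hX ∅ Set.univ Set.infinite_univ
  refine ⟨B, hB, hdec.imp ?_ ?_⟩ <;>
    exact fun h C hCB hC => h (GalvinPrikry.mem_ellentuck_empty.mpr ⟨hC, hCB⟩)
end

section
/- For all k, n, s ∈ ℕ there exists M ∈ ℕ such that for every coloring c of the k-element subsets of {0,…,M−1} with s colors, there exists an n-element set H ⊆ {0,…,M−1} such that c is constant on the k-element subsets of H. -/
/-!
Induction on `k`. Call `A` min-homogeneous if the colour of a `(k + 1)`-subset of `A` depends only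
on its least element. A large set contains a large min-homogeneous one: take its least element `a`,
use Ramsey for `k` to shrink the rest to a set on which `t ↦ c (insert a t)` is constant, and
recurse inside that set. Pigeonholing the colours attached to the least elements of a
min-homogeneous set of size `s * n + 1` then gives `n` elements on which `c` is constant.
-/

open Finset

variable {α β : Type*}

def IsMonochromatic (c : Finset α → β) (k : ℕ) (H : Finset α) : Prop :=
  ∀ t₁ t₂ : Finset α, t₁ ⊆ H → t₂ ⊆ H → #t₁ = k → #t₂ = k → c t₁ = c t₂

theorem isMonochromatic_zero (c : Finset α → β) (H : Finset α) : IsMonochromatic c 0 H := by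
  intro t₁ t₂ _ _ h₁ h₂
  rw [card_eq_zero.mp h₁, card_eq_zero.mp h₂]

theorem IsMonochromatic.exists_eq [Nonempty β] {c : Finset α → β} {k : ℕ} {H : Finset α}
    (h : IsMonochromatic c k H) : ∃ y, ∀ t ⊆ H, #t = k → c t = y := by
  by_cases hH : ∃ t ⊆ H, #t = k
  · obtain ⟨t₀, ht₀H, ht₀⟩ := hH
    exact ⟨c t₀, fun t htH ht => h t t₀ htH ht₀H ht ht₀⟩
  · exact ⟨Classical.arbitrary β, fun t htH ht => (hH ⟨t, htH, ht⟩).elim⟩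

def RamseyProperty (α β : Type*) (k : ℕ) : Prop :=
  ∀ n, ∃ M, ∀ S : Finset α, M ≤ #S → ∀ c : Finset α → β,
    ∃ H ⊆ S, #H = n ∧ IsMonochromatic c k H

theorem ramseyProperty_zero : RamseyProperty α β 0 := fun n =>
  ⟨n, fun _ hS c =>
    let ⟨H, hHS, hH⟩ := exists_subset_card_eq hS
    ⟨H, hHS, hH, isMonochromatic_zero c H⟩⟩

section LinearOrder

variable [LinearOrder α]

theorem Finset.exists_min_insert_eq_of_card_eq_succ {t : Finset α} {k : ℕ} (ht : #t = k + 1) :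
    ∃ a ∈ t, ∃ u ⊆ t, #u = k ∧ (∀ x ∈ u, a < x) ∧ insert a u = t := by
  have hne : t.Nonempty := card_pos.mp (by omega)
  refine ⟨t.min' hne, t.min'_mem hne, t.erase (t.min' hne), erase_subset _ _, ?_, ?_,
    insert_erase (t.min'_mem hne)⟩
  · rw [card_erase_of_mem (t.min'_mem hne), ht, Nat.add_sub_cancel]
  · exact fun x hx => t.min'_lt_of_mem_erase_min' hne hx

def IsMinHomogeneous (c : Finset α → β) (k : ℕ) (A : Finset α) : Prop :=
  ∃ f : α → β, ∀ a ∈ A, ∀ t ⊆ A, #t = k → (∀ x ∈ t, a < x) → c (insert a t) = f a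

variable {c : Finset α → β} {k : ℕ} {A : Finset α}

theorem isMinHomogeneous_empty (c : Finset α → β) (k : ℕ) : IsMinHomogeneous c k ∅ :=
  ⟨fun _ => c ∅, fun _ ha => absurd ha (notMem_empty _)⟩

theorem IsMinHomogeneous.insert {a : α} {v : β} (hA : IsMinHomogeneous c k A)
    (haA : ∀ x ∈ A, a < x) (hv : ∀ t ⊆ A, #t = k → c (insert a t) = v) :
    IsMinHomogeneous c k (insert a A) := by
  obtain ⟨f, hf⟩ := hA
  refine ⟨Function.update f a v, fun x hx t ht htk hxt => ?_⟩
  have hax : a ≤ x := by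
    rcases mem_insert.mp hx with rfl | hx
    · exact le_rfl
    · exact (haA x hx).le
  have htA : t ⊆ A := fun y hy =>
    (mem_insert.mp (ht hy)).resolve_left (hax.trans_lt (hxt y hy)).ne'
  rcases mem_insert.mp hx with rfl | hxA
  · rw [Function.update_self]
    exact hv t htA htk
  · rw [Function.update_of_ne (haA x hxA).ne']
    exact hf x hxA t htA htk hxt

theorem IsMinHomogeneous.exists_isMonochromatic_succ [Fintype β] {n : ℕ}
    (hA : IsMinHomogeneous c k A) (hcard : Fintype.card β * n < #A) :
    ∃ H ⊆ A, #H = n ∧ IsMonochromatic c (k + 1) H := by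
  classical
  obtain ⟨f, hf⟩ := hA
  obtain ⟨y, -, hy⟩ := exists_lt_card_fiber_of_mul_lt_card_of_maps_to
    (fun a _ => mem_univ (f a)) (by rwa [card_univ])
  obtain ⟨H, hHfib, hH⟩ := exists_subset_card_eq hy.le
  have hHA : H ⊆ A := hHfib.trans (filter_subset _ A)
  have hcol : ∀ t ⊆ H, #t = k + 1 → c t = y := by
    intro t htH ht
    obtain ⟨a, hat, u, hut, hu, hau, rfl⟩ := exists_min_insert_eq_of_card_eq_succ ht
    rw [hf a (hHA (htH hat)) u (hut.trans (htH.trans hHA)) hu hau]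
    exact (mem_filter.mp (hHfib (htH hat))).2
  exact ⟨H, hHA, hH, fun t₁ t₂ h₁ h₂ hc₁ hc₂ => (hcol t₁ h₁ hc₁).trans (hcol t₂ h₂ hc₂).symm⟩

theorem RamseyProperty.exists_isMinHomogeneous (h : RamseyProperty α β k) (L : ℕ) :
    ∃ m, ∀ S : Finset α, m ≤ #S → ∀ c : Finset α → β,
      ∃ A ⊆ S, #A = L ∧ IsMinHomogeneous c k A := by
  induction L with
  | zero => exact ⟨0, fun _ _ c => ⟨∅, empty_subset _, rfl, isMinHomogeneous_empty c k⟩⟩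
  | succ L ih =>
    obtain ⟨m, hm⟩ := ih
    obtain ⟨M, hM⟩ := h m
    refine ⟨M + 1, fun S hS c => ?_⟩
    have hne : S.Nonempty := card_pos.mp (by omega)
    set a := S.min' hne
    have haS : a ∈ S := S.min'_mem hne
    obtain ⟨T, hTS, hT, hTmono⟩ := hM (S.erase a) (by rw [card_erase_of_mem haS]; omega)
      (fun t => c (insert a t))
    obtain ⟨A, hAT, hA, hAhom⟩ := hm T hT.ge c
    have : Nonempty β := ⟨c ∅⟩
    obtain ⟨v, hv⟩ := hTmono.exists_eq
    have haA : ∀ x ∈ A, a < x := fun x hx => S.min'_lt_of_mem_erase_min' hne (hTS (hAT hx))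
    refine ⟨insert a A, insert_subset haS ((hAT.trans hTS).trans (erase_subset a S)), ?_,
      hAhom.insert haA fun t ht => hv t (ht.trans hAT)⟩
    rw [card_insert_of_notMem fun h => (haA a h).false, hA]

theorem RamseyProperty.succ [Fintype β] (h : RamseyProperty α β k) :
    RamseyProperty α β (k + 1) := fun n => by
  obtain ⟨m, hm⟩ := h.exists_isMinHomogeneous (Fintype.card β * n + 1)
  refine ⟨m, fun S hS c => ?_⟩
  obtain ⟨A, hAS, hA, hAhom⟩ := hm S hS c
  obtain ⟨H, hHA, hH, hHmono⟩ := hAhom.exists_isMonochromatic_succ (n := n) (by omega)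
  exact ⟨H, hHA.trans hAS, hH, hHmono⟩

theorem ramseyProperty [Fintype β] (k : ℕ) : RamseyProperty α β k := by
  induction k with
  | zero => exact ramseyProperty_zero
  | succ k ih => exact ih.succ

end LinearOrder

/-- Finite Ramsey's theorem. -/
theorem finite_ramsey (k n s : ℕ) :
    ∃ M : ℕ, ∀ c : Finset ℕ → Fin s,
      ∃ H : Finset ℕ, H ⊆ Finset.range M ∧ H.card = n ∧
        ∀ t₁ t₂ : Finset ℕ, t₁ ⊆ H → t₂ ⊆ H → t₁.card = k → t₂.card = k →
          c t₁ = c t₂ := by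
  obtain ⟨M, hM⟩ := ramseyProperty (α := ℕ) (β := Fin s) k n
  exact ⟨M, hM (range M) (card_range M).ge⟩
end

section
/- For all k, s ∈ ℕ and every coloring c with s colors of the set of all partitions of initial segments {0,…,n−1} of ℕ into exactly k nonempty blocks (n ranging over ℕ), there exists an infinite partition Y of ℕ such that c is constant on the set of k-block finite partitions that are reducts of Y, i.e., coarsenings of restrictions of Y to initial segments obtained by merging blocks. -/
/-- `g` codes an infinite partition of ℕ (with blocks ordered by their minima):
`g x` is the minimum of the block containing `x`, and there are infinitely many blocks. -/
def IsInfPart (g : ℕ → ℕ) : Prop :=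
  (∀ x, g x ≤ x) ∧ (∀ x, g (g x) = g x) ∧ (Set.range g).Infinite

/-- `Z` is coarser than `Y`: every block of `Y` is contained in a block of `Z`. -/
def Coarser (Z Y : ℕ → ℕ) : Prop := ∀ a b, Y a = Y b → Z a = Z b

/-- `p = (n, f)` codes a partition of `{0,…,n-1}` (with blocks labeled by their minima,
and `f` normalized to `0` beyond `n`). -/
def IsFinPart (p : ℕ × (ℕ → ℕ)) : Prop :=
  (∀ x < p.1, p.2 x ≤ x ∧ p.2 (p.2 x) = p.2 x) ∧ ∀ x, p.1 ≤ x → p.2 x = 0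

/-- The number of blocks of the finite partition `p`. -/
def blocks (p : ℕ × (ℕ → ℕ)) : ℕ := ((Finset.range p.1).image p.2).card

/-- The `k`-th approximation of the infinite partition `g`: its first `k` blocks,
cut below the minimum of the `k`-th block. -/
noncomputable def rPart (k : ℕ) (g : ℕ → ℕ) : ℕ × (ℕ → ℕ) :=
  (Nat.nth (fun x => g x = x) k,
    fun x => if x < Nat.nth (fun x => g x = x) k then g x else 0)

/-!
Call an ultrafilter `p` on the words over an alphabet *Carlson–Simpson* if it is idempotent and
every member of `p` contains the head and all evaluations of some variable word. Such ultrafilters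
exist on every finite alphabet: Ellis's lemma produces one on `m + 1` letters as soon as every
finite coloring of these words has a variable word whose head and evaluations share a color, and
a Carlson–Simpson ultrafilter on `m` letters provides that variable word by a pigeonhole argument
on the limit colors along a chain of variable words. Choosing the variable words one at a time
inside `p`-large sets gives the Carlson–Simpson theorem: a sequence `u` of variable words such that
all the words `u 0 (b 0) ⋯ u (J - 1) (b (J - 1)) ++ head (u J)` have the same color.

The dual Ramsey theorem is proved by induction on `k` for the partitions coarser than a given
infinite partition `X`. The step is a fusion producing `Y` coarser than `X` on which the color of
the `(k + 1)`-st approximation only depends on the `k`-th one. At stage `n` of the fusion the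
first `n + 1` blocks are kept and the others are atoms; a word over the kept blocks puts the first
atoms into kept blocks, and the Carlson–Simpson theorem for the coloring of these words by the
colors of all their coarsenings `σ` replaces the atoms by a sequence of variable words. If a
partition `Z` coarser than the limit `Y` starts its `k`-th block with block `n` of `Y`, its
`(k + 1)`-st approximation is obtained from one of these words and the coarsening `σ` that `Z`
induces on the kept blocks, which its `k`-th approximation determines.
-/

/-- Concatenation makes words a semigroup, so that ultrafilters on words can be multiplied. -/
abbrev wordSemigroup (α : Type*) : Semigroup (List α) where
  mul := (· ++ ·)
  mul_assoc := List.append_assoc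

attribute [local instance] wordSemigroup Ultrafilter.mul Ultrafilter.semigroup

theorem word_mul_eq_append {α : Type*} (v w : List α) : v * w = v ++ w := rfl

namespace Ultrafilter

variable {α κ : Type*} [Finite κ]

theorem exists_eventually_eq (p : Ultrafilter α) (f : α → κ) : ∃ i, ∀ᶠ a in p, f a = i := by
  obtain ⟨i, hi⟩ := (p.map f).eq_pure_of_finite
  have : ({i} : Set κ) ∈ p.map f := by rw [hi]; exact rfl
  exact ⟨i, Ultrafilter.mem_map.1 this⟩

noncomputable def eventualValue (p : Ultrafilter α) (f : α → κ) : κ :=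
  (p.exists_eventually_eq f).choose

theorem eventually_eq_eventualValue (p : Ultrafilter α) (f : α → κ) :
    ∀ᶠ a in p, f a = p.eventualValue f :=
  (p.exists_eventually_eq f).choose_spec

theorem eventualValue_eq {p : Ultrafilter α} {f : α → κ} {i : κ} (h : ∀ᶠ a in p, f a = i) :
    p.eventualValue f = i := by
  obtain ⟨a, ha, ha'⟩ := (h.and (p.eventually_eq_eventualValue f)).exists
  exact ha' ▸ ha

theorem eventually_eventualValue_mul {M : Type*} [Semigroup M] {p : Ultrafilter M}
    (hp : p * p = p) (f : M → κ) :
    ∀ᶠ x in p, p.eventualValue (fun y => f (x * y)) = p.eventualValue f := by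
  have h : ∀ᶠ z in (p * p : Ultrafilter M), f z = p.eventualValue f := by
    rw [hp]; exact p.eventually_eq_eventualValue f
  exact ((Ultrafilter.eventually_mul p p _).1 h).mono fun _ hx => eventualValue_eq hx

end Ultrafilter

/-- A variable word `head ++ body`: the entries `none` of the body are the occurrences of the
variable, and the first of them opens the body. -/
structure VariableWord (α : Type*) where
  head : List α
  body : List (Option α)
  body_head? : body.head? = some none

namespace VariableWord

variable {α β : Type*}

theorem body_eq_cons (v : VariableWord α) : ∃ l, v.body = none :: l := by
  obtain ⟨_, _ | ⟨o, l⟩, h⟩ := v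
  · cases h
  · cases h; exact ⟨l, rfl⟩

def eval (v : VariableWord α) (a : α) : List α := v.head ++ v.body.map (·.getD a)

def map (f : α → β) (v : VariableWord α) : VariableWord β :=
  ⟨v.head.map f, v.body.map (Option.map f), by simp [List.head?_map, v.body_head?]⟩

theorem eval_map (f : α → β) (v : VariableWord α) (a : α) :
    (v.map f).eval (f a) = (v.eval a).map f := by
  simp only [eval, map, List.map_append, List.map_map]
  congr 2
  funext o
  cases o <;> rfl

def append (v w : VariableWord α) : VariableWord α :=
  ⟨v.head, v.body ++ (w.head.map some ++ w.body), by
    obtain ⟨l, hl⟩ := v.body_eq_cons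
    simp [hl]⟩

theorem eval_append (v w : VariableWord α) (a : α) :
    (v.append w).eval a = v.eval a ++ w.eval a := by
  simp [eval, append, List.map_map, Function.comp_def]

def wrap (P : List α) (v : VariableWord α) (Q : List α) : VariableWord α :=
  ⟨P ++ v.head, v.body ++ Q.map some, by
    obtain ⟨l, hl⟩ := v.body_eq_cons
    simp [hl]⟩

theorem eval_wrap (P : List α) (v : VariableWord α) (Q : List α) (a : α) :
    (wrap P v Q).eval a = P ++ v.eval a ++ Q := by
  simp [eval, wrap, List.map_map, Function.comp_def]

theorem head_wrap (P : List α) (v : VariableWord α) (Q : List α) :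
    (wrap P v Q).head = P ++ v.head := rfl

def concat (v : ℕ → VariableWord α) : ℕ → VariableWord α
  | 0 => v 0
  | d + 1 => (concat v d).append (v (d + 1))

theorem eval_concat (v : ℕ → VariableWord α) (a : α) (d : ℕ) :
    (concat v d).eval a = (List.range (d + 1)).flatMap fun s => (v s).eval a := by
  induction d with
  | zero => simp [concat]
  | succ d ih =>
    rw [concat, eval_append, ih, List.range_succ (n := d + 1), List.flatMap_append]
    simp

theorem head_concat (v : ℕ → VariableWord α) (d : ℕ) : (concat v d).head = (v 0).head := by
  induction d with
  | zero => rfl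
  | succ d ih => exact ih

end VariableWord

def IsCarlsonSimpson {α : Type*} (p : Ultrafilter (List α)) : Prop :=
  p * p = p ∧ ∀ A ∈ p, ∃ v : VariableWord α, v.head ∈ A ∧ ∀ a, v.eval a ∈ A

section Recursion

variable {α β ι κ : Type*}

/-- The prefixes `E (u 0) (c 0) ++ ⋯ ++ E (u (t-1)) (c (t-1))` when each `u s` is `pick` of the
prefixes of the previous step. -/
def reachablePrefixes [Fintype ι] [DecidableEq β] (E : VariableWord α → ι → List β)
    (pick : Finset (List β) → VariableWord α) : ℕ → Finset (List β)
  | 0 => {[]}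
  | t + 1 => (reachablePrefixes E pick t).biUnion fun P =>
      Finset.univ.image fun c => P ++ E (pick (reachablePrefixes E pick t)) c

theorem IsCarlsonSimpson.exists_seq_mem [Finite ι] {p : Ultrafilter (List α)}
    (hp : IsCarlsonSimpson p) (G : List β → Set (List α)) (hG : ∀ P, G P ∈ p)
    (E : VariableWord α → ι → List β) :
    ∃ u : ℕ → VariableWord α, ∀ t (c : ℕ → ι),
      (u t).head ∈ G ((List.range t).flatMap fun s => E (u s) (c s)) ∧
      ∀ a, (u t).eval a ∈ G ((List.range t).flatMap fun s => E (u s) (c s)) := by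
  classical
  have := Fintype.ofFinite ι
  choose pick hpick using fun S : Finset (List β) =>
    hp.2 _ ((Filter.biInter_finset_mem S).2 fun P _ => hG P)
  let u t := pick (reachablePrefixes E pick t)
  have hreach : ∀ t (c : ℕ → ι),
      ((List.range t).flatMap fun s => E (u s) (c s)) ∈ reachablePrefixes E pick t := by
    intro t c
    induction t with
    | zero => simp [reachablePrefixes]
    | succ t ih =>
      rw [List.range_succ, List.flatMap_append, reachablePrefixes, Finset.mem_biUnion]
      exact ⟨_, ih, Finset.mem_image.2 ⟨c t, Finset.mem_univ _, by simp [u]⟩⟩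
  refine ⟨u, fun t c => ⟨?_, fun a => ?_⟩⟩
  · exact Set.mem_iInter₂.1 (hpick _).1 _ (hreach t c)
  · exact Set.mem_iInter₂.1 ((hpick _).2 a) _ (hreach t c)

end Recursion

section LimitColor

variable {α β κ : Type*} [Finite κ]

noncomputable def limitColor (p : Ultrafilter (List α)) (γ : List β → κ) (ι : List α → List β)
    (P : List β) : κ :=
  p.eventualValue fun w => γ (P ++ ι w)

theorem eventually_limitColor {p : Ultrafilter (List α)} (hp : p * p = p) (γ : List β → κ)
    {ι : List α → List β} (hι : ∀ v w, ι (v ++ w) = ι v ++ ι w) (P : List β) :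
    ∀ᶠ w in p, γ (P ++ ι w) = limitColor p γ ι P ∧
      limitColor p γ ι (P ++ ι w) = limitColor p γ ι P := by
  refine (p.eventually_eq_eventualValue _).and ?_
  filter_upwards [Ultrafilter.eventually_eventualValue_mul hp fun w => γ (P ++ ι w)] with w hw
  simpa only [limitColor, word_mul_eq_append, hι, List.append_assoc] using hw

end LimitColor

section CarlsonSimpson

variable {κ : Type*} [Finite κ]

theorem IsCarlsonSimpson.exists_seq_color_eq {α : Type*} [Finite α] {p : Ultrafilter (List α)}
    (hp : IsCarlsonSimpson p) (χ : List α → κ) :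
    ∃ u : ℕ → VariableWord α, ∀ J (b : ℕ → α),
      χ (((List.range J).flatMap fun s => (u s).eval (b s)) ++ (u J).head) = χ (u 0).head := by
  set ĉ := limitColor p χ id
  obtain ⟨u, hu⟩ := hp.exists_seq_mem (fun P => {w | χ (P ++ id w) = ĉ P ∧ ĉ (P ++ id w) = ĉ P})
    (eventually_limitColor hp.1 χ fun _ _ => rfl) fun v a => v.eval a
  have hlim : ∀ J (b : ℕ → α), ĉ ((List.range J).flatMap fun s => (u s).eval (b s)) = ĉ [] := by
    intro J b
    induction J with
    | zero => rfl
    | succ J ih =>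
      rw [List.range_succ, List.flatMap_append, List.flatMap_singleton]
      exact ((hu J b).2 (b J)).2.trans ih
  refine ⟨u, fun J b => ?_⟩
  exact ((hu J b).1.1.trans (hlim J b)).trans (hu 0 b).1.1.symm

theorem IsCarlsonSimpson.exists_eval_eq_head {m : ℕ} {p : Ultrafilter (List (Fin m))}
    (hp : IsCarlsonSimpson p) (γ : List (Fin (m + 1)) → κ) :
    ∃ v : VariableWord (Fin (m + 1)), ∀ c, γ (v.eval c) = γ v.head := by
  set ι : List (Fin m) → List (Fin (m + 1)) := List.map Fin.castSucc
  have hι : ∀ v w, ι (v ++ w) = ι v ++ ι w := fun _ _ => List.map_append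
  set ĉ := limitColor p γ ι
  obtain ⟨u, hu⟩ := hp.exists_seq_mem (fun P => {w | γ (P ++ ι w) = ĉ P ∧ ĉ (P ++ ι w) = ĉ P})
    (eventually_limitColor hp.1 γ hι) fun v c => (v.map Fin.castSucc).eval c
  set span : (ℕ → Fin (m + 1)) → ℕ → List (Fin (m + 1)) := fun c t =>
    (List.range t).flatMap fun s => ((u s).map Fin.castSucc).eval (c s)
  -- evaluating everything at the new letter gives a chain; two of its points have the same color
  obtain ⟨i, j, hij, hcij⟩ := Set.finite_univ.exists_lt_map_eq_of_forall_mem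
    (f := fun t => ĉ (span (fun _ => Fin.last m) t)) fun _ => Set.mem_univ _
  obtain ⟨d, rfl⟩ := Nat.exists_eq_add_of_lt hij
  set P := span (fun _ => Fin.last m) i
  set c' : Fin (m + 1) → ℕ → Fin (m + 1) := fun c s => if s < i then Fin.last m else c
  have hspan : ∀ c e, span (c' c) (i + e) =
      P ++ (List.range e).flatMap fun s => ((u (i + s)).map Fin.castSucc).eval c := by
    intro c e
    simp only [span, List.range_add, List.flatMap_append, List.flatMap_map]
    congr 1
    · exact List.flatMap_congr fun s hs => by simp [c', List.mem_range.1 hs]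
    · exact List.flatMap_congr fun s _ => by simp [c']
  obtain ⟨w, hw⟩ := (Filter.eventually_all.2 fun c =>
    eventually_limitColor hp.1 γ hι (span (c' c) (i + (d + 1)))).exists
  -- each evaluation continues a chain from `P` along which the limit color stays `ĉ P`
  refine ⟨.wrap P (.concat (fun s => (u (i + s)).map Fin.castSucc) d) (ι w), fun c => ?_⟩
  have hhead : γ (VariableWord.wrap P (.concat (fun s => (u (i + s)).map Fin.castSucc) d)
      (ι w)).head = ĉ P := by
    rw [VariableWord.head_wrap, VariableWord.head_concat]
    exact (hu i fun _ => Fin.last m).1.1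
  rw [VariableWord.eval_wrap, VariableWord.eval_concat, ← hspan, (hw c).1, hhead]
  show ĉ (span (c' c) (i + (d + 1))) = ĉ P
  induction c using Fin.lastCases with
  | last =>
    have : c' (Fin.last m) = fun _ => Fin.last m := by funext s; simp [c']
    rw [this, ← Nat.add_assoc]
    exact hcij.symm
  | cast b =>
    -- evaluating at an old letter does not change the limit color
    clear hw hhead
    induction d + 1 with
    | zero => rw [hspan, List.range_zero, List.flatMap_nil, List.append_nil]
    | succ e ih =>
      have hstep := ((hu (i + e) (c' b.castSucc)).2 b).2
      rw [← Nat.add_assoc, show span (c' b.castSucc) (i + e + 1) =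
        span (c' b.castSucc) (i + e) ++ ι ((u (i + e)).eval b) by
          simp [span, List.range_succ, c', ι, ← VariableWord.eval_map]]
      exact hstep.trans ih

end CarlsonSimpson

section Existence

variable {α : Type*}

/-- Ellis's lemma applied to the closed subsemigroup of ultrafilters all of whose members contain
a variable word: it is nonempty as soon as no finite family of sets separates the head of every
variable word from one of its evaluations. -/
theorem exists_isCarlsonSimpson_of_forall_finset
    (h : ∀ T : Finset (Set (List α)), ∃ v : VariableWord α,
      ∀ A ∈ T, ∀ a, v.eval a ∈ A ↔ v.head ∈ A) :
    ∃ p : Ultrafilter (List α), IsCarlsonSimpson p := by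
  set Wit : Set (List α) → Prop := fun A => ∃ v : VariableWord α, v.head ∈ A ∧ ∀ a, v.eval a ∈ A
  set H : Set (Ultrafilter (List α)) := {q | ∀ A ∈ q, Wit A}
  have hH : H = ⋂ A ∈ {A | ¬ Wit A}, {q : Ultrafilter (List α) | Aᶜ ∈ q} := by
    ext q
    simp only [H, Set.mem_iInter, Set.mem_ofPred_eq, Ultrafilter.compl_mem_iff_notMem]
    exact ⟨fun hq A hA hAq => hA (hq A hAq), fun hq A hAq => by_contra fun hA => hq A hA hAq⟩
  have hne : H.Nonempty := by
    obtain ⟨q, hq⟩ := Ultrafilter.exists_ultrafilter_of_finite_inter_nonempty {B | ¬ Wit Bᶜ}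
      fun T hT => by
        obtain ⟨v, hv⟩ := h T
        refine ⟨v.head, Set.mem_sInter.2 fun B hB => by_contra fun hvB => hT hB ?_⟩
        exact ⟨v, hvB, fun a => mt ((hv B hB a).1) hvB⟩
    exact ⟨q, fun A hA => by_contra fun hAw =>
      q.compl_notMem_iff.2 hA (hq (show Aᶜ ∈ {B | ¬ Wit Bᶜ} by simpa using hAw))⟩
  have hmul : ∀ q₁ ∈ H, ∀ q₂ ∈ H, q₁ * q₂ ∈ H := by
    intro q₁ _ q₂ hq₂ A hA
    obtain ⟨w, hw⟩ := (q₁ : Filter (List α)).nonempty_of_mem hA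
    obtain ⟨v, hvh, hve⟩ := hq₂ _ hw
    refine ⟨.wrap w v [], hvh, fun a => ?_⟩
    simpa [VariableWord.eval_wrap, word_mul_eq_append] using hve a
  have hclosed : IsClosed H := hH ▸ isClosed_biInter fun A _ => ultrafilter_isClosed_basic Aᶜ
  obtain ⟨p, hpH, hidem⟩ := exists_idempotent_in_compact_subsemigroup
    Ultrafilter.continuous_mul_left H hne hclosed.isCompact hmul
  exact ⟨p, hidem, hpH⟩

theorem exists_isCarlsonSimpson : ∀ m : ℕ, ∃ p : Ultrafilter (List (Fin m)), IsCarlsonSimpson p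
  | 0 => exists_isCarlsonSimpson_of_forall_finset fun _ => ⟨⟨[], [none], rfl⟩, fun _ _ a => a.elim0⟩
  | m + 1 => by
    obtain ⟨p, hp⟩ := exists_isCarlsonSimpson m
    refine exists_isCarlsonSimpson_of_forall_finset fun T => ?_
    obtain ⟨v, hv⟩ := hp.exists_eval_eq_head fun w => {A : T | w ∈ A.1}
    exact ⟨v, fun A hA a => by simpa using Set.ext_iff.1 (hv a) ⟨A, hA⟩⟩

/-- **Carlson–Simpson theorem.** -/
theorem exists_variableWord_seq {m : ℕ} {κ : Type*} [Finite κ] (χ : List (Fin m) → κ) :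
    ∃ u : ℕ → VariableWord (Fin m), ∀ J (b : ℕ → Fin m),
      χ (((List.range J).flatMap fun s => (u s).eval (b s)) ++ (u J).head) = χ (u 0).head :=
  (exists_isCarlsonSimpson m).elim fun _ hp => hp.exists_seq_color_eq χ

end Existence

namespace VariableWord

variable {α : Type*}

def pattern (v : VariableWord α) : List (Option α) := v.head.map some ++ v.body

theorem eval_eq_map_pattern (v : VariableWord α) (a : α) :
    v.eval a = v.pattern.map (·.getD a) := by
  simp [eval, pattern, List.map_map, Function.comp_def]

theorem length_head_lt (v : VariableWord α) : v.head.length < v.pattern.length := by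
  obtain ⟨l, hl⟩ := v.body_eq_cons
  simp [pattern, hl]

def taggedPattern (u : ℕ → VariableWord α) (J : ℕ) : List (Option α × ℕ) :=
  (List.range J).flatMap fun s => (u s).pattern.map (·, s)

/-- Entry `t` of the infinite concatenation of the patterns of `u 0, u 1, …`, tagged with the
index of its word (the first `t + 1` words are long enough). -/
def tag (u : ℕ → VariableWord α) (t : ℕ) : Option α × ℕ :=
  (taggedPattern u (t + 1)).getD t (none, 0)

def firstVar (u : ℕ → VariableWord α) (j : ℕ) : ℕ := (taggedPattern u j).length + (u j).head.length

variable (u : ℕ → VariableWord α)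

theorem taggedPattern_succ (J : ℕ) :
    taggedPattern u (J + 1) = taggedPattern u J ++ (u J).pattern.map (·, J) := by
  simp [taggedPattern, List.range_succ]

theorem taggedPattern_prefix {J J' : ℕ} (h : J ≤ J') :
    taggedPattern u J <+: taggedPattern u J' := by
  induction h with
  | refl => exact List.prefix_refl _
  | step _ ih => exact ih.trans (taggedPattern_succ u _ ▸ List.prefix_append _ _)

theorem firstVar_lt_length (j : ℕ) : firstVar u j < (taggedPattern u (j + 1)).length := by
  simpa [firstVar, taggedPattern_succ] using (u j).length_head_lt

theorem firstVar_strictMono : StrictMono (firstVar u) :=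
  strictMono_nat_of_lt_succ fun j => (firstVar_lt_length u j).trans_le (Nat.le_add_right _ _)

theorem le_length_taggedPattern (J : ℕ) : J ≤ (taggedPattern u J).length := by
  induction J with
  | zero => exact Nat.zero_le _
  | succ J ih =>
    rw [taggedPattern_succ, List.length_append, List.length_map]
    have := (u J).length_head_lt
    omega

theorem getElem_taggedPattern {J t : ℕ} (ht : t < (taggedPattern u J).length) :
    (taggedPattern u J)[t] = tag u t := by
  have ht' : t < (taggedPattern u (t + 1)).length := le_length_taggedPattern u (t + 1)
  rw [tag, List.getD_eq_getElem _ _ ht']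
  rcases le_total J (t + 1) with h | h
  · exact (taggedPattern_prefix u h).getElem ht
  · exact ((taggedPattern_prefix u h).getElem ht').symm

theorem tag_firstVar (j : ℕ) : tag u (firstVar u j) = (none, j) := by
  rw [← getElem_taggedPattern u (firstVar_lt_length u j)]
  obtain ⟨l, hl⟩ := (u j).body_eq_cons
  simp [taggedPattern_succ, firstVar, List.getElem_append_right, pattern, hl]

theorem firstVar_le {t j : ℕ} (h : tag u t = (none, j)) : firstVar u j ≤ t := by
  suffices ∀ J (ht : t < (taggedPattern u J).length), (taggedPattern u J)[t] = (none, j) →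
      firstVar u j ≤ t from
    this (t + 1) (le_length_taggedPattern u (t + 1)) (getElem_taggedPattern u _ ▸ h)
  intro J
  induction J with
  | zero => intro ht; simp [taggedPattern] at ht
  | succ J ih =>
    intro ht hJ
    simp only [taggedPattern_succ] at ht hJ
    by_cases hlt : t < (taggedPattern u J).length
    · exact ih hlt (by rwa [List.getElem_append_left hlt] at hJ)
    · rw [List.getElem_append_right (by omega), List.getElem_map, Prod.mk.injEq] at hJ
      obtain ⟨hnone, rfl⟩ := hJ
      by_contra hcon
      have hr : t - (taggedPattern u J).length < ((u J).head.map some).length := by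
        simp only [firstVar, List.length_map] at hcon ⊢
        omega
      simp only [pattern, List.getElem_append_left hr] at hnone
      simp at hnone

theorem eval_seq_append_head (b : ℕ → α) (J : ℕ) :
    ((List.range J).flatMap fun s => (u s).eval (b s)) ++ (u J).head =
      ((taggedPattern u (J + 1)).take (firstVar u J)).map fun e => e.1.getD (b e.2) := by
  have hseq : ((List.range J).flatMap fun s => (u s).eval (b s)) =
      (taggedPattern u J).map fun e => e.1.getD (b e.2) := by
    simp [taggedPattern, List.map_flatMap, eval_eq_map_pattern, List.map_map, Function.comp_def]
  rw [hseq, taggedPattern_succ, firstVar, List.take_append, List.take_of_length_le (by omega),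
    Nat.add_sub_cancel_left, pattern, List.map_append]
  congr 1
  rw [List.map_append, List.take_append_of_le_length (by simp), List.take_of_length_le (by simp)]
  simp [List.map_map, Function.comp_def]

theorem getD_eval_seq_append_head (b : ℕ → α) {J t : ℕ} (ht : t < firstVar u J) (d : α) :
    (((List.range J).flatMap fun s => (u s).eval (b s)) ++ (u J).head).getD t d =
      (tag u t).1.getD (b (tag u t).2) := by
  have ht' : t < (taggedPattern u (J + 1)).length := ht.trans (firstVar_lt_length u J)
  rw [eval_seq_append_head, List.getD_eq_getElem _ _ (by simpa using ⟨ht, ht'⟩),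
    List.getElem_map, List.getElem_take, getElem_taggedPattern]

theorem length_eval_seq_append_head (b : ℕ → α) (J : ℕ) :
    (((List.range J).flatMap fun s => (u s).eval (b s)) ++ (u J).head).length = firstVar u J := by
  rw [eval_seq_append_head, List.length_map, List.length_take,
    min_eq_left (firstVar_lt_length u J).le]

end VariableWord

section Partitions

theorem isInfPart_id : IsInfPart id :=
  ⟨fun _ => le_rfl, fun _ => rfl, by rw [Set.range_id]; exact Set.infinite_univ⟩

theorem Coarser.trans {Z Y X : ℕ → ℕ} (hZY : Coarser Z Y) (hYX : Coarser Y X) : Coarser Z X :=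
  fun a b h => hZY a b (hYX a b h)

namespace IsInfPart

variable {Y : ℕ → ℕ} (hY : IsInfPart Y)
include hY

theorem infinite_fixed : {x | Y x = x}.Infinite :=
  Set.Infinite.mono (by rintro _ ⟨x, rfl⟩; exact hY.2.1 x) hY.2.2

theorem apply_nth (k : ℕ) : Y (Nat.nth (fun x => Y x = x) k) = Nat.nth (fun x => Y x = x) k :=
  Nat.nth_mem_of_infinite hY.infinite_fixed k

theorem nth_zero : Nat.nth (fun x => Y x = x) 0 = 0 :=
  Nat.le_zero.1 (Nat.nth_zero ▸ Nat.sInf_le (Nat.le_zero.1 (hY.1 0)))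

theorem apply_eq_self_of_coarser {Z : ℕ → ℕ} (hZ : IsInfPart Z) (hZY : Coarser Z Y) {x : ℕ}
    (hx : Z x = x) : Y x = x := by
  have h := hZY (Y x) x (hY.2.1 x)
  have := hZ.1 (Y x)
  have := hY.1 x
  omega

theorem coarser_apply {Z : ℕ → ℕ} (hZY : Coarser Z Y) (x : ℕ) : Z (Y x) = Z x :=
  hZY _ _ (hY.2.1 x)

end IsInfPart

noncomputable def labelMin {β : Type*} (L : ℕ → β) (ℓ : β) : ℕ := sInf {x | L x = ℓ}

theorem labelMin_le {β : Type*} {L : ℕ → β} {x : ℕ} {ℓ : β} (h : L x = ℓ) : labelMin L ℓ ≤ x :=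
  Nat.sInf_le h

theorem labelMin_apply_eq_of_forall_lt {β : Type*} {f : ℕ → β} {Z : ℕ → ℕ} (hZ : IsInfPart Z)
    {N x : ℕ} (hx : x < N) (h : ∀ y < N, f y = f x ↔ Z y = Z x) : labelMin f (f x) = Z x := by
  have hZx : Z x < N := (hZ.1 x).trans_lt hx
  refine le_antisymm (Nat.sInf_le ((h _ hZx).2 (hZ.2.1 x))) (le_csInf ⟨x, rfl⟩ fun y hy => ?_)
  by_contra hlt
  have := (h y (by omega)).1 hy
  have := hZ.1 y
  omega

/-- The restriction of `g` to `{0, …, N - 1}`, in the coding of `IsFinPart`. -/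
def cut (N : ℕ) (g : ℕ → ℕ) : ℕ × (ℕ → ℕ) := (N, fun x => if x < N then g x else 0)

theorem rPart_eq_cut (k : ℕ) (g : ℕ → ℕ) : rPart k g = cut (Nat.nth (fun x => g x = x) k) g := rfl

theorem cut_congr {N : ℕ} {g g' : ℕ → ℕ} (h : ∀ x < N, g x = g' x) : cut N g = cut N g' := by
  simp only [cut, Prod.mk.injEq, true_and]
  funext x
  split_ifs with hx
  exacts [h x hx, rfl]

theorem rPart_zero {Z : ℕ → ℕ} (hZ : IsInfPart Z) : rPart 0 Z = (0, fun _ => 0) := by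
  simp [rPart, hZ.nth_zero]

theorem eq_of_rPart_eq {Z₁ Z₂ : ℕ → ℕ} (hZ₁ : IsInfPart Z₁) (hZ₂ : IsInfPart Z₂) {k : ℕ}
    (h : rPart k Z₁ = rPart k Z₂) :
    Nat.nth (fun x => Z₁ x = x) k = Nat.nth (fun x => Z₂ x = x) k ∧
      ∀ y ≤ Nat.nth (fun x => Z₁ x = x) k, Z₁ y = Z₂ y := by
  have hm : Nat.nth (fun x => Z₁ x = x) k = Nat.nth (fun x => Z₂ x = x) k := congrArg Prod.fst h
  refine ⟨hm, fun y hy => ?_⟩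
  rcases hy.lt_or_eq with hy | rfl
  · simpa [rPart, hy, hm ▸ hy] using congrFun (congrArg Prod.snd h) y
  · rw [hZ₁.apply_nth, hm, hZ₂.apply_nth]

end Partitions

namespace DualRamsey

open VariableWord

structure AtomsOrdered (L : ℕ → ℕ) (n : ℕ) : Prop where
  exists_eq : ∀ ℓ, n ≤ ℓ → ∃ x, L x = ℓ
  strictMonoOn : StrictMonoOn (labelMin L) (Set.Ici n)

theorem AtomsOrdered.apply_labelMin {L : ℕ → ℕ} {n ℓ : ℕ} (h : AtomsOrdered L n) (hℓ : n ≤ ℓ) :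
    L (labelMin L ℓ) = ℓ :=
  Nat.sInf_mem (h.exists_eq ℓ hℓ)

theorem AtomsOrdered.labelMin_le_of_le {L : ℕ → ℕ} {n ℓ : ℕ} (h : AtomsOrdered L n) {x : ℕ}
    (hℓ : n ≤ ℓ) (hx : ℓ ≤ L x) : labelMin L ℓ ≤ x :=
  (h.strictMonoOn.monotoneOn hℓ (hℓ.trans hx : n ≤ L x) hx).trans (labelMin_le rfl)

def substitute (n : ℕ) (u : ℕ → VariableWord (Fin (n + 1))) (ℓ : ℕ) : ℕ :=
  if ℓ < n + 1 then ℓ else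
    match tag u (ℓ - (n + 1)) with
    | (some a, _) => a
    | (none, j) => n + 1 + j

section Substitute

variable {n : ℕ} (u : ℕ → VariableWord (Fin (n + 1)))

theorem substitute_of_lt {ℓ : ℕ} (h : ℓ < n + 1) : substitute n u ℓ = ℓ := if_pos h

theorem substitute_of_tag_some {t : ℕ} {a : Fin (n + 1)} {j : ℕ} (h : tag u t = (some a, j)) :
    substitute n u (n + 1 + t) = a := by
  rw [substitute, if_neg (by omega), Nat.add_sub_cancel_left, h]

theorem substitute_of_tag_none {t j : ℕ} (h : tag u t = (none, j)) :
    substitute n u (n + 1 + t) = n + 1 + j := by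
  rw [substitute, if_neg (by omega), Nat.add_sub_cancel_left, h]

theorem substitute_eq_atom {ℓ j : ℕ} (h : substitute n u ℓ = n + 1 + j) :
    ∃ t, ℓ = n + 1 + t ∧ tag u t = (none, j) := by
  unfold substitute at h
  split_ifs at h with hℓ
  · omega
  · obtain ⟨t, rfl⟩ := Nat.exists_eq_add_of_le (not_lt.1 hℓ)
    rw [Nat.add_sub_cancel_left] at h
    rcases ht : tag u t with ⟨_ | a, j'⟩ <;> simp only [ht] at h
    · exact ⟨t, rfl, by rw [ht, show j' = j by omega]⟩
    · have := a.isLt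
      omega

theorem labelMin_substitute {L : ℕ → ℕ} (hL : AtomsOrdered L n) (j : ℕ) :
    labelMin (substitute n u ∘ L) (n + 1 + j) = labelMin L (n + 1 + firstVar u j) := by
  refine le_antisymm (labelMin_le ?_) (le_csInf ?_ fun x hx => ?_)
  · rw [Function.comp_apply, hL.apply_labelMin (by omega),
      substitute_of_tag_none u (tag_firstVar u j)]
  · exact ⟨_, show substitute n u (L (labelMin L (n + 1 + firstVar u j))) = n + 1 + j by
      rw [hL.apply_labelMin (by omega), substitute_of_tag_none u (tag_firstVar u j)]⟩
  · obtain ⟨t, ht, htag⟩ := substitute_eq_atom u hx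
    exact hL.labelMin_le_of_le (by omega) (ht ▸ by have := firstVar_le u htag; omega)

theorem AtomsOrdered.substitute_comp {L : ℕ → ℕ} (hL : AtomsOrdered L n) :
    AtomsOrdered (substitute n u ∘ L) (n + 1) := by
  have key : ∀ ℓ, n + 1 ≤ ℓ → labelMin (substitute n u ∘ L) ℓ =
      labelMin L (n + 1 + firstVar u (ℓ - (n + 1))) := fun ℓ hℓ => by
    rw [← labelMin_substitute u hL, Nat.add_sub_cancel' hℓ]
  refine ⟨fun ℓ hℓ => ⟨labelMin L (n + 1 + firstVar u (ℓ - (n + 1))), ?_⟩,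
    fun ℓ hℓ ℓ' hℓ' hlt => ?_⟩
  · rw [Function.comp_apply, hL.apply_labelMin (by omega),
      substitute_of_tag_none u (tag_firstVar u _), Nat.add_sub_cancel' hℓ]
  · rw [key ℓ hℓ, key ℓ' hℓ']
    have := firstVar_strictMono u (show ℓ - (n + 1) < ℓ' - (n + 1) by simp at hℓ hℓ'; omega)
    exact hL.strictMonoOn (by simp; omega) (by simp; omega) (by omega)

end Substitute

def fillLabel (n : ℕ) (w : List (Fin (n + 1))) (ℓ : ℕ) : Fin (n + 1) :=
  if h : ℓ < n + 1 then ⟨ℓ, h⟩ else w.getD (ℓ - (n + 1)) 0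

variable {κ : Type*} [Finite κ] (c : ℕ × (ℕ → ℕ) → κ) (X : ℕ → ℕ)

/-- The coloring of words at stage `n`: the word `w` fills the first `w.length` atoms with kept
blocks, the result is cut before the next atom, and `σ` then merges the kept blocks. -/
noncomputable def stageColoring (L : ℕ → ℕ) (n : ℕ) (w : List (Fin (n + 1)))
    (σ : Fin (n + 1) → Fin (n + 1)) : κ :=
  c (cut (labelMin L (n + 1 + w.length)) fun x =>
    labelMin (fun y => σ (fillLabel n w (L y))) (σ (fillLabel n w (L x))))

noncomputable def carlsonSimpsonSeq {m : ℕ} {κ' : Type*} [Finite κ'] (χ : List (Fin m) → κ') :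
    ℕ → VariableWord (Fin m) :=
  (exists_variableWord_seq χ).choose

theorem carlsonSimpsonSeq_spec {m : ℕ} {κ' : Type*} [Finite κ'] (χ : List (Fin m) → κ') (J : ℕ)
    (b : ℕ → Fin m) :
    χ (((List.range J).flatMap fun s => (carlsonSimpsonSeq χ s).eval (b s)) ++
      (carlsonSimpsonSeq χ J).head) =
      χ (carlsonSimpsonSeq χ 0).head :=
  (exists_variableWord_seq χ).choose_spec J b

/-- The labelings of the fusion: at stage `n` the labels below `n` are the blocks kept so far and
the labels from `n` on are atoms, initially the blocks of `X`. Passing to stage `n + 1` keeps the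
atom `n` and substitutes the Carlson–Simpson sequence of the stage-`n` coloring for the atoms
`n + 1 + t`: the `t`-th entry of `u 0 u 1 ⋯` sends the atom to a kept block if it is a constant,
and to the new atom `n + 1 + j` if it is a variable of `u j`. -/
noncomputable def stage : ℕ → ℕ → ℕ
  | 0 => fun x => Nat.count (fun y => X y = y) (X x)
  | n + 1 => substitute n (carlsonSimpsonSeq (stageColoring c (stage n) n)) ∘ stage n

noncomputable def limitBlockMin (n : ℕ) : ℕ := labelMin (stage c X n) n

/-- `x` lies in a kept block from stage `x + 1` on (`stage_lt_of_le`). -/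
noncomputable def limitLabel (x : ℕ) : ℕ := stage c X (x + 1) x

noncomputable def limitPartition (x : ℕ) : ℕ := limitBlockMin c X (limitLabel c X x)

variable {c X}

theorem atomsOrdered_stage_zero (hX : IsInfPart X) : AtomsOrdered (stage c X 0) 0 := by
  have hinf := hX.infinite_fixed
  have hnth : ∀ ℓ, stage c X 0 (Nat.nth (fun y => X y = y) ℓ) = ℓ := fun ℓ => by
    simp [stage, hX.apply_nth, Nat.count_nth_of_infinite hinf]
  have hmin : ∀ ℓ, labelMin (stage c X 0) ℓ = Nat.nth (fun y => X y = y) ℓ := fun ℓ => by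
    refine le_antisymm (labelMin_le (hnth ℓ)) (le_csInf ⟨_, hnth ℓ⟩ fun x hx => ?_)
    have hx : Nat.count (fun y => X y = y) (X x) = ℓ := hx
    rw [← hx, Nat.nth_count (p := fun y => X y = y) (hX.2.1 x)]
    exact hX.1 x
  refine ⟨fun ℓ _ => ⟨_, hnth ℓ⟩, fun ℓ _ ℓ' _ h => ?_⟩
  rw [hmin, hmin]
  exact Nat.nth_strictMono hinf h

theorem atomsOrdered_stage (hX : IsInfPart X) : ∀ n, AtomsOrdered (stage c X n) n
  | 0 => atomsOrdered_stage_zero hX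
  | n + 1 => (atomsOrdered_stage hX n).substitute_comp _

theorem stage_succ_of_lt {n x : ℕ} (h : stage c X n x < n + 1) :
    stage c X (n + 1) x = stage c X n x :=
  substitute_of_lt _ h

theorem stage_eq_of_lt {n x : ℕ} (h : stage c X n x < n) {n' : ℕ} (hn : n ≤ n') :
    stage c X n' x = stage c X n x := by
  induction hn with
  | refl => rfl
  | step hle ih =>
    have : n ≤ _ := hle
    rw [stage_succ_of_lt (by rw [ih]; omega), ih]

theorem stage_congr {n x y : ℕ} (h : stage c X n x = stage c X n y) {n' : ℕ} (hn : n ≤ n') :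
    stage c X n' x = stage c X n' y := by
  induction hn with
  | refl => exact h
  | step _ ih => simp only [stage, Function.comp_apply, ih]

theorem limitBlockMin_strictMono (hX : IsInfPart X) : StrictMono (limitBlockMin c X) := by
  refine strictMono_nat_of_lt_succ fun n => ?_
  have h : labelMin (stage c X (n + 1)) (n + 1) =
      labelMin (stage c X n) (n + 1 + firstVar _ 0) :=
    labelMin_substitute _ (atomsOrdered_stage hX n) 0
  rw [limitBlockMin, limitBlockMin, h]
  exact (atomsOrdered_stage hX n).strictMonoOn (Set.mem_Ici.2 le_rfl) (by simp; omega) (by omega)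

theorem stage_lt_of_lt_limitBlockMin (hX : IsInfPart X) {n x : ℕ} (hx : x < limitBlockMin c X n) :
    stage c X n x < n := by
  by_contra h
  exact absurd ((atomsOrdered_stage hX n).labelMin_le_of_le le_rfl (not_lt.1 h)) (not_le.2 hx)

theorem stage_lt_of_le (hX : IsInfPart X) {n x : ℕ} (hn : x + 1 ≤ n) : stage c X n x < n := by
  have hx : stage c X (x + 1) x < x + 1 := stage_lt_of_lt_limitBlockMin hX
    ((limitBlockMin_strictMono hX).id_le (x + 1))
  rw [stage_eq_of_lt hx hn]
  omega

theorem limitLabel_eq (hX : IsInfPart X) {n x : ℕ} (h : stage c X n x < n) :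
    limitLabel c X x = stage c X n x := by
  rw [limitLabel, ← stage_eq_of_lt (stage_lt_of_le hX le_rfl) (le_max_left _ n),
    stage_eq_of_lt h (le_max_right _ _)]

theorem limitLabel_eq_of_stage_eq (hX : IsInfPart X) {n x y : ℕ}
    (h : stage c X n x = stage c X n y) : limitLabel c X x = limitLabel c X y := by
  set N := max n (max (x + 1) (y + 1))
  rw [limitLabel_eq hX (stage_lt_of_le hX (n := N) (by omega)),
    limitLabel_eq hX (stage_lt_of_le hX (n := N) (by omega)), stage_congr h (by omega)]

variable (c X) in
noncomputable def stageSeq (n : ℕ) : ℕ → VariableWord (Fin (n + 1)) :=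
  carlsonSimpsonSeq (stageColoring c (stage c X n) n)

theorem stage_succ (n : ℕ) : stage c X (n + 1) = substitute n (stageSeq c X n) ∘ stage c X n := rfl

theorem limitLabel_limitBlockMin (hX : IsInfPart X) (i : ℕ) :
    limitLabel c X (limitBlockMin c X i) = i := by
  have h : stage c X i (limitBlockMin c X i) = i := (atomsOrdered_stage hX i).apply_labelMin le_rfl
  rw [limitLabel_eq hX (n := i + 1) (by rw [stage_succ_of_lt (by omega), h]; omega),
    stage_succ_of_lt (by omega), h]

theorem limitBlockMin_limitLabel_le (hX : IsInfPart X) (x : ℕ) :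
    limitBlockMin c X (limitLabel c X x) ≤ x := by
  by_contra h
  have h' := stage_lt_of_lt_limitBlockMin hX (not_le.1 h)
  rw [← limitLabel_eq hX h'] at h'
  exact lt_irrefl _ h'

theorem isInfPart_limitPartition (hX : IsInfPart X) : IsInfPart (limitPartition c X) := by
  have hfix : ∀ i, limitPartition c X (limitBlockMin c X i) = limitBlockMin c X i := fun i => by
    rw [limitPartition, limitLabel_limitBlockMin hX]
  exact ⟨limitBlockMin_limitLabel_le hX, fun x => hfix _, Set.infinite_of_injective_forall_mem
    (limitBlockMin_strictMono hX).injective fun i => ⟨_, hfix i⟩⟩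

theorem coarser_limitPartition (hX : IsInfPart X) : Coarser (limitPartition c X) X :=
  fun a b h => by
    rw [limitPartition, limitPartition,
      limitLabel_eq_of_stage_eq hX (n := 0) (x := a) (y := b) (by simp [stage, h])]

theorem limitLabel_le_iff (hX : IsInfPart X) {a b : ℕ} (ha : limitPartition c X a = a)
    (hb : limitPartition c X b = b) : limitLabel c X a ≤ limitLabel c X b ↔ a ≤ b := by
  conv_rhs => rw [← ha, ← hb]
  exact (limitBlockMin_strictMono hX).le_iff_le.symm

theorem labelMin_stage_apply (hX : IsInfPart X) {e : ℕ} (he : limitPartition c X e = e) (n : ℕ) :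
    labelMin (stage c X n) (stage c X n e) = e := by
  refine le_antisymm (labelMin_le rfl) (le_csInf ⟨e, rfl⟩ fun y hy => ?_)
  calc e = limitPartition c X y := by
        rw [← he, limitPartition, limitPartition, limitLabel_eq_of_stage_eq hX hy]
    _ ≤ y := limitBlockMin_limitLabel_le hX y

theorem fillLabel_eval_seq_append_head {n : ℕ} (u : ℕ → VariableWord (Fin (n + 1)))
    (b : ℕ → Fin (n + 1)) {J ℓ : ℕ} (hℓ : ℓ < n + 1 + firstVar u J) :
    (substitute n u ℓ < n + 1 ∧
        ((fillLabel n (((List.range J).flatMap fun s => (u s).eval (b s)) ++ (u J).head) ℓ : ℕ)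
          = substitute n u ℓ)) ∨
      ∃ j, substitute n u ℓ = n + 1 + j ∧
        fillLabel n (((List.range J).flatMap fun s => (u s).eval (b s)) ++ (u J).head) ℓ = b j := by
  by_cases hlt : ℓ < n + 1
  · exact .inl ⟨by rwa [substitute_of_lt u hlt], by simp [fillLabel, hlt, substitute_of_lt u hlt]⟩
  obtain ⟨t, rfl⟩ := Nat.exists_eq_add_of_le (not_lt.1 hlt)
  have hfill : fillLabel n (((List.range J).flatMap fun s => (u s).eval (b s)) ++ (u J).head)
      (n + 1 + t) = (tag u t).1.getD (b (tag u t).2) := by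
    rw [fillLabel, dif_neg hlt, Nat.add_sub_cancel_left,
      getD_eval_seq_append_head u b (by omega)]
  rcases htag : tag u t with ⟨_ | a, j⟩
  · exact .inr ⟨j, substitute_of_tag_none u htag, by simp [hfill, htag]⟩
  · exact .inl ⟨by rw [substitute_of_tag_some u htag]; exact a.isLt,
      by simp [hfill, htag, substitute_of_tag_some u htag]⟩

open Fin.NatCast

variable (c X) in
/-- Kept block `i` of stage `n` is sent to the kept block holding the minimum of its `Z`-block. -/
noncomputable def mergePattern (Z : ℕ → ℕ) (n : ℕ) (i : Fin (n + 1)) : Fin (n + 1) :=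
  (limitLabel c X (Z (limitBlockMin c X i)) : Fin (n + 1))

variable (c X) in
/-- The kept block holding the minimum of the `Z`-block of the new atom `j` of stage `n + 1`. -/
noncomputable def atomLetter (Z : ℕ → ℕ) (n j : ℕ) : Fin (n + 1) :=
  (limitLabel c X (Z (labelMin (stage c X (n + 1)) (n + 1 + j))) : Fin (n + 1))

variable (c X) in
/-- The constant value of the stage-`n` coloring on the words of the Carlson–Simpson sequence. -/
noncomputable def stageValue (n : ℕ) (σ : Fin (n + 1) → Fin (n + 1)) : κ :=
  stageColoring c (stage c X n) n (stageSeq c X n 0).head σ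

section Verification

variable {Z : ℕ → ℕ}

theorem mergePattern_natCast (hX : IsInfPart X) (hZY : Coarser Z (limitPartition c X)) {n w : ℕ}
    (hw : limitLabel c X w ≤ n) :
    mergePattern c X Z n (limitLabel c X w) = (limitLabel c X (Z w) : Fin (n + 1)) := by
  rw [mergePattern, Fin.val_cast_of_lt (by omega)]
  exact congrArg _ (congrArg _ ((isInfPart_limitPartition hX).coarser_apply hZY w))

theorem mergePattern_fillLabel (hX : IsInfPart X) (hZ : IsInfPart Z)
    (hZY : Coarser Z (limitPartition c X)) {n J x : ℕ}
    (hbound : ∀ y ≤ x, limitLabel c X (Z y) ≤ n)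
    (hx : stage c X n x < n + 1 + firstVar (stageSeq c X n) J) :
    mergePattern c X Z n (fillLabel n (((List.range J).flatMap fun s =>
        (stageSeq c X n s).eval (atomLetter c X Z n s)) ++ (stageSeq c X n J).head)
      (stage c X n x)) = limitLabel c X (Z x) := by
  rcases fillLabel_eval_seq_append_head _ (atomLetter c X Z n) hx with ⟨hlt, hval⟩ | ⟨j, hj, hval⟩
  · have hlim : limitLabel c X x = stage c X (n + 1) x := limitLabel_eq hX hlt
    have hfill : fillLabel n (((List.range J).flatMap fun s =>
        (stageSeq c X n s).eval (atomLetter c X Z n s)) ++ (stageSeq c X n J).head)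
          (stage c X n x) = (limitLabel c X x : Fin (n + 1)) := by
      rw [hlim]
      exact Fin.ext (hval.trans (Fin.val_cast_of_lt hlt).symm)
    rw [hfill, mergePattern_natCast hX hZY (by rw [hlim]; exact Nat.lt_succ_iff.1 hlt)]
  · set y := labelMin (stage c X (n + 1)) (n + 1 + j)
    have hxy : stage c X (n + 1) x = stage c X (n + 1) y := by
      rw [(atomsOrdered_stage hX (n + 1)).apply_labelMin (by omega)]
      exact hj
    have hZxy : Z x = Z y :=
      hZY _ _ (by rw [limitPartition, limitPartition, limitLabel_eq_of_stage_eq hX hxy])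
    rw [hval, atomLetter,
      mergePattern_natCast hX hZY (hbound _ (labelMin_le (L := stage c X (n + 1)) hj)), hZ.2.1,
      hZxy]

theorem color_cut_eq_stageValue (hX : IsInfPart X) (hZ : IsInfPart Z)
    (hZY : Coarser Z (limitPartition c X)) {m e : ℕ} (hm : Z m = m) (he : Z e = e)
    (hgap : ∀ y < e, Z y = y → y ≤ m) (hme : m < e) :
    c (cut e Z) = stageValue c X (limitLabel c X m) (mergePattern c X Z (limitLabel c X m)) := by
  have hfix : ∀ {y}, Z y = y → limitPartition c X y = y :=
    (isInfPart_limitPartition hX).apply_eq_self_of_coarser hZ hZY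
  set n := limitLabel c X m
  have hbound : ∀ y < e, limitLabel c X (Z y) ≤ n := fun y hy =>
    (limitLabel_le_iff hX (hfix (hZ.2.1 y)) (hfix hm)).2 (hgap _ ((hZ.1 y).trans_lt hy) (hZ.2.1 y))
  -- the cut point `e` is the minimum of a new atom `J`
  have hJ : n + 1 ≤ stage c X (n + 1) e := by
    by_contra h
    have := (limitLabel_le_iff hX (hfix he) (hfix hm)).1
      (by rw [limitLabel_eq hX (not_le.1 h)]; omega)
    omega
  set J := stage c X (n + 1) e - (n + 1)
  have hcutpt : labelMin (stage c X n) (n + 1 + firstVar (stageSeq c X n) J) = e := by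
    rw [← labelMin_substitute _ (atomsOrdered_stage hX n), ← stage_succ, Nat.add_sub_cancel' hJ,
      labelMin_stage_apply hX (hfix he)]
  have hletter := fun x (hx : x < e) => mergePattern_fillLabel hX hZ hZY (J := J) (x := x)
    (fun y hy => hbound y (by omega)) (by
      by_contra h
      have := (atomsOrdered_stage hX n).labelMin_le_of_le (by omega) (not_lt.1 h)
      omega)
  set w := ((List.range J).flatMap fun s => (stageSeq c X n s).eval (atomLetter c X Z n s)) ++
    (stageSeq c X n J).head
  have hf : ∀ x < e, ∀ y < e, mergePattern c X Z n (fillLabel n w (stage c X n y)) =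
      mergePattern c X Z n (fillLabel n w (stage c X n x)) ↔ Z y = Z x := by
    intro x hx y hy
    rw [hletter y hy, hletter x hx, ← Fin.val_inj,
      Fin.val_cast_of_lt (by have := hbound y hy; omega),
      Fin.val_cast_of_lt (by have := hbound x hx; omega)]
    refine ⟨fun h => ?_, fun h => by rw [h]⟩
    rw [← hfix (hZ.2.1 y), ← hfix (hZ.2.1 x), limitPartition, limitPartition, h]
  calc c (cut e Z) = stageColoring c (stage c X n) n w (mergePattern c X Z n) := by
        rw [stageColoring, length_eval_seq_append_head, hcutpt]
        exact congrArg c (cut_congr fun x hx =>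
          (labelMin_apply_eq_of_forall_lt hZ hx (hf x hx)).symm)
    _ = stageValue c X n (mergePattern c X Z n) := congrFun (carlsonSimpsonSeq_spec _ J _) _

end Verification

theorem exists_coarser_color_rPart_succ_eq (c : ℕ × (ℕ → ℕ) → κ) (hX : IsInfPart X) :
    ∃ Y, IsInfPart Y ∧ Coarser Y X ∧ ∀ k Z₁ Z₂, IsInfPart Z₁ → IsInfPart Z₂ → Coarser Z₁ Y →
      Coarser Z₂ Y → rPart k Z₁ = rPart k Z₂ → c (rPart (k + 1) Z₁) = c (rPart (k + 1) Z₂) := by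
  refine ⟨limitPartition c X, isInfPart_limitPartition hX, coarser_limitPartition hX,
    fun k Z₁ Z₂ hZ₁ hZ₂ hZ₁Y hZ₂Y h => ?_⟩
  have hcolor : ∀ Z, IsInfPart Z → Coarser Z (limitPartition c X) →
      c (rPart (k + 1) Z) = stageValue c X (limitLabel c X (Nat.nth (fun x => Z x = x) k))
        (mergePattern c X Z (limitLabel c X (Nat.nth (fun x => Z x = x) k))) := fun Z hZ hZY => by
    rw [rPart_eq_cut]
    exact color_cut_eq_stageValue hX hZ hZY (hZ.apply_nth k) (hZ.apply_nth (k + 1))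
      (fun _ hy hfix => Nat.le_nth_of_lt_nth_succ hy hfix)
      (Nat.nth_strictMono hZ.infinite_fixed (Nat.lt_succ_self k))
  obtain ⟨hm, heq⟩ := eq_of_rPart_eq hZ₁ hZ₂ h
  rw [hcolor Z₁ hZ₁ hZ₁Y, hcolor Z₂ hZ₂ hZ₂Y, ← hm]
  congr 1
  funext i
  rw [mergePattern, mergePattern, heq]
  have hfix := (isInfPart_limitPartition hX).apply_eq_self_of_coarser hZ₁ hZ₁Y (hZ₁.apply_nth k)
  calc limitBlockMin c X i ≤ limitBlockMin c X (limitLabel c X (Nat.nth (fun x => Z₁ x = x) k)) :=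
        (limitBlockMin_strictMono hX).monotone (Nat.lt_succ_iff.1 i.isLt)
    _ = _ := hfix

theorem exists_coarser_color_rPart_eq (k : ℕ) :
    ∀ (c : ℕ × (ℕ → ℕ) → κ) {X : ℕ → ℕ}, IsInfPart X → ∃ Y, IsInfPart Y ∧ Coarser Y X ∧
      ∀ Z₁ Z₂, IsInfPart Z₁ → IsInfPart Z₂ → Coarser Z₁ Y → Coarser Z₂ Y →
        c (rPart k Z₁) = c (rPart k Z₂) := by
  induction k with
  | zero => exact fun c X hX => ⟨X, hX, fun _ _ h => h,
      fun Z₁ Z₂ h₁ h₂ _ _ => by rw [rPart_zero h₁, rPart_zero h₂]⟩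
  | succ k ih =>
    intro c X hX
    obtain ⟨Y₁, hY₁, hY₁X, hY₁c⟩ := exists_coarser_color_rPart_succ_eq c hX
    have hF : ∀ q, ∃ i, ∀ Z, IsInfPart Z → Coarser Z Y₁ → rPart k Z = q →
        c (rPart (k + 1) Z) = i := fun q => by
      by_cases hq : ∃ Z, IsInfPart Z ∧ Coarser Z Y₁ ∧ rPart k Z = q
      · obtain ⟨Z₀, hZ₀, hZ₀Y, rfl⟩ := hq
        exact ⟨c (rPart (k + 1) Z₀), fun Z hZ hZY h => hY₁c k Z Z₀ hZ hZ₀ hZY hZ₀Y h⟩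
      · exact ⟨c q, fun Z hZ hZY h => absurd ⟨Z, hZ, hZY, h⟩ hq⟩
    choose F hF using hF
    obtain ⟨Y, hY, hYY₁, hYc⟩ := ih F hY₁
    refine ⟨Y, hY, hYY₁.trans hY₁X, fun Z₁ Z₂ h₁ h₂ hZ₁ hZ₂ => ?_⟩
    rw [hF _ Z₁ h₁ (hZ₁.trans hYY₁) rfl, hF _ Z₂ h₂ (hZ₂.trans hYY₁) rfl]
    exact hYc Z₁ Z₂ h₁ h₂ hZ₁ hZ₂

end DualRamsey

/-- Halbeisen's dualization of Ramsey's theorem: every finite coloring of the `k`-block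
finite partitions is constant on the set `(<ω, Y)^k` of `k`-th approximations of infinite
partitions coarser than `Y`, for some infinite partition `Y` of ℕ. -/
theorem dual_ramsey (k s : ℕ) (c : ℕ × (ℕ → ℕ) → Fin s) :
    ∃ Y : ℕ → ℕ, IsInfPart Y ∧
      ∀ Z₁ Z₂ : ℕ → ℕ, IsInfPart Z₁ → IsInfPart Z₂ → Coarser Z₁ Y → Coarser Z₂ Y →
        c (rPart k Z₁) = c (rPart k Z₂) :=
  (DualRamsey.exists_coarser_color_rPart_eq k c isInfPart_id).imp fun _ h => ⟨h.1, h.2.2⟩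
end

section
/- The dualized Ramsey theorem for partitions implies the classical infinite Ramsey theorem: given a finite coloring c of the k-element subsets of ℕ, define a coloring d of (k+1)-block finite partitions s by d(s) = c({min x : x a block of s} \ {0}); monochromaticity for d on approximations of a single infinite partition yields an infinite c-monochromatic set. -/
/-- The dualized Ramsey theorem: for every finite coloring of the finite `(k+1)`-block
partitions there is an infinite partition `Y` such that all `(k+1)`-st approximations of
infinite partitions coarser than `Y` get the same color. -/
def DualRamsey : Prop :=
  ∀ (k s : ℕ) (c : ℕ × (ℕ → ℕ) → Fin s),
    ∃ Y : ℕ → ℕ, IsInfPart Y ∧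
      ∀ Z₁ Z₂ : ℕ → ℕ, IsInfPart Z₁ → IsInfPart Z₂ → Coarser Z₁ Y → Coarser Z₂ Y →
        c (rPart (k + 1) Z₁) = c (rPart (k + 1) Z₂)

/-- The classical infinite Ramsey theorem. -/
def InfiniteRamsey : Prop :=
  ∀ (k s : ℕ) (c : Finset ℕ → Fin s),
    ∃ A : Set ℕ, A.Infinite ∧
      ∀ t₁ t₂ : Finset ℕ, ↑t₁ ⊆ A → ↑t₂ ⊆ A → t₁.card = k → t₂.card = k → c t₁ = c t₂

/-!
Given a colouring `c` of the `k`-sets, colour a `(k+1)`-block partition by `c` of its set of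
nonzero block minima, and let `Y` be monochromatic for this colouring. Every `k`-set `t` of
nonzero block minima of `Y` arises this way: merging into the block of `0` all blocks of `Y`
whose minimum is neither in `t` nor above `max t` gives a partition `Z` coarser than `Y`
whose first `k + 1` blocks have minima `{0} ∪ t`. Hence `c` is constant on the `k`-subsets
of the infinite set of nonzero block minima of `Y`.
-/

open Finset

def blockMins (p : ℕ × (ℕ → ℕ)) : Finset ℕ := (range p.1).image p.2

namespace IsInfPart

variable {Y : ℕ → ℕ}

theorem apply_zero (hY : IsInfPart Y) : Y 0 = 0 :=
  Nat.le_zero.mp (hY.1 0)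

theorem apply_eq_self_of_mem_range (hY : IsInfPart Y) {x : ℕ} (hx : x ∈ Set.range Y) :
    Y x = x := by
  obtain ⟨y, rfl⟩ := hx
  exact hY.2.1 y

end IsInfPart

theorem blockMins_rPart {g : ℕ → ℕ} (hg : IsInfPart g) (n : ℕ) :
    blockMins (rPart n g) = {x ∈ range (Nat.nth (fun x => g x = x) n) | g x = x} := by
  ext y
  simp only [blockMins, rPart, mem_image, mem_range, mem_filter]
  constructor
  · rintro ⟨x, hx, rfl⟩
    rw [if_pos hx]
    exact ⟨(hg.1 x).trans_lt hx, hg.2.1 x⟩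
  · rintro ⟨hy, hfix⟩
    exact ⟨y, hy, by rw [if_pos hy, hfix]⟩

theorem Nat.nth_card_eq_of_filter_range_eq {p : ℕ → Prop} [DecidablePred p] {M : ℕ}
    {s : Finset ℕ} (hM : p M) (hs : {x ∈ range M | p x} = s) : Nat.nth p s.card = M := by
  rw [← hs, ← Nat.count_eq_card_filter_range, Nat.nth_count hM]

def keepBlocks (Y : ℕ → ℕ) (B : Set ℕ) [DecidablePred (· ∈ B)] (x : ℕ) : ℕ :=
  if Y x ∈ B then Y x else 0

section keepBlocks

variable {Y : ℕ → ℕ} {B : Set ℕ} [DecidablePred (· ∈ B)]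

theorem coarser_keepBlocks : Coarser (keepBlocks Y B) Y := by
  intro a b hab
  simp only [keepBlocks, hab]

theorem keepBlocks_eq_self_iff (hY : IsInfPart Y) {x : ℕ} :
    keepBlocks Y B x = x ↔ x = 0 ∨ (Y x = x ∧ x ∈ B) := by
  unfold keepBlocks
  split_ifs with hx
  · constructor
    · intro h
      exact .inr ⟨h, h ▸ hx⟩
    · rintro (rfl | ⟨h, -⟩)
      exacts [hY.apply_zero, h]
  · constructor
    · exact fun h => .inl h.symm
    · rintro (rfl | ⟨h, hB⟩)
      exacts [rfl, absurd (h.symm ▸ hB) hx]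

theorem isInfPart_keepBlocks (hY : IsInfPart Y) (hB : (B ∩ Set.range Y).Infinite) :
    IsInfPart (keepBlocks Y B) := by
  refine ⟨fun x => ?_, fun x => ?_, hB.mono ?_⟩
  · unfold keepBlocks
    split_ifs
    exacts [hY.1 x, x.zero_le]
  · by_cases hx : Y x ∈ B
    · simp only [keepBlocks, if_pos hx, hY.2.1 x]
    · simp only [keepBlocks, if_neg hx, hY.apply_zero, ite_self]
  · rintro x ⟨hxB, hxY⟩
    exact ⟨x, by simp only [keepBlocks, hY.apply_eq_self_of_mem_range hxY, if_pos hxB]⟩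

end keepBlocks

open Classical in
theorem exists_coarser_blockMins_rPart_eq {Y : ℕ → ℕ} (hY : IsInfPart Y) {t : Finset ℕ}
    (ht : ↑t ⊆ Set.range Y \ {0}) :
    ∃ Z, IsInfPart Z ∧ Coarser Z Y ∧ blockMins (rPart (t.card + 1) Z) = insert 0 t := by
  set N := t.sup id
  set B : Set ℕ := ↑t ∪ Set.Ioi N
  set Z := keepBlocks Y B
  have hBY : (B ∩ Set.range Y).Infinite := by
    refine (hY.2.2.sdiff (Set.finite_Iic N)).mono ?_
    rintro x ⟨hxY, hxN⟩
    exact ⟨.inr (Set.mem_Ioi.mpr (not_le.mp hxN)), hxY⟩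
  have hZ : IsInfPart Z := isInfPart_keepBlocks hY hBY
  -- `M`, the least block minimum of `Y` above `max t`, becomes the minimum of block `t.card + 1` of `Z`.
  have hex : ∃ M, N < M ∧ Y M = M := by
    obtain ⟨M, hMY, hNM⟩ := hY.2.2.exists_gt N
    exact ⟨M, hNM, hY.apply_eq_self_of_mem_range hMY⟩
  set M := Nat.find hex
  obtain ⟨hNM, hYM⟩ : N < M ∧ Y M = M := Nat.find_spec hex
  have hle : ∀ m ∈ t, m ≤ N := fun m hm => le_sup (f := id) hm
  have hZfix : ∀ x, Z x = x ↔ x = 0 ∨ (Y x = x ∧ (x ∈ t ∨ N < x)) :=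
    fun x => keepBlocks_eq_self_iff hY
  have hZM : Z M = M := (hZfix M).mpr (.inr ⟨hYM, .inr hNM⟩)
  have hfilter : {x ∈ range M | Z x = x} = insert 0 t := by
    ext x
    simp only [mem_filter, mem_range, mem_insert, hZfix]
    constructor
    · rintro ⟨hxM, rfl | ⟨hYx, hxt | hNx⟩⟩
      · exact .inl rfl
      · exact .inr hxt
      · exact absurd hxM (not_lt.mpr (Nat.find_min' hex ⟨hNx, hYx⟩))
    · rintro (rfl | hxt)
      · exact ⟨(Nat.zero_le N).trans_lt hNM, .inl rfl⟩
      · exact ⟨(hle x hxt).trans_lt hNM, .inr ⟨hY.apply_eq_self_of_mem_range (ht hxt).1, .inl hxt⟩⟩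
  have hnth : Nat.nth (fun x => Z x = x) (t.card + 1) = M := by
    rw [← card_insert_of_notMem fun h => (ht h).2 rfl]
    exact Nat.nth_card_eq_of_filter_range_eq hZM hfilter
  exact ⟨Z, hZ, coarser_keepBlocks, by rw [blockMins_rPart hZ, hnth, hfilter]⟩

/-- The dualized Ramsey theorem for partitions implies the classical infinite Ramsey
theorem (via the coloring `d(s) = c({min x : x a block of s} \ {0})`). -/
theorem dual_ramsey_implies_infinite_ramsey : DualRamsey → InfiniteRamsey := by
  intro hDR k s c
  obtain ⟨Y, hY, hmono⟩ := hDR k s fun p => c ((blockMins p).erase 0)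
  refine ⟨Set.range Y \ {0}, hY.2.2.sdiff (Set.finite_singleton 0), ?_⟩
  have hcolor : ∀ t : Finset ℕ, ↑t ⊆ Set.range Y \ {0} → t.card = k →
      ∃ Z, IsInfPart Z ∧ Coarser Z Y ∧ (blockMins (rPart (k + 1) Z)).erase 0 = t := by
    intro t ht htk
    obtain ⟨Z, hZ, hZY, hmins⟩ := exists_coarser_blockMins_rPart_eq hY ht
    refine ⟨Z, hZ, hZY, ?_⟩
    rw [← htk, hmins, erase_insert fun h => (ht h).2 rfl]
  intro t₁ t₂ ht₁ ht₂ hk₁ hk₂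
  obtain ⟨Z₁, hZ₁, hZ₁Y, rfl⟩ := hcolor t₁ ht₁ hk₁
  obtain ⟨Z₂, hZ₂, hZ₂Y, rfl⟩ := hcolor t₂ ht₂ hk₂
  exact hmono Z₁ Z₂ hZ₁ hZ₂ hZ₁Y hZ₂Y
end

section
/- Let (R, ≤, r) be a triple where R is metrically closed (as a subspace of AR^ℕ, AR discrete) and satisfies axioms A.1–A.6 of topological Ramsey space theory. Then for every family F ⊆ AR of approximations and every A ∈ R, there exists B ≤ A such that either no approximation of any C ≤ B belongs to F, or for every C ≤ B there exists n with r_n(C) ∈ F. -/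
/-- A triple `(R, ≤, r)`: a set `R`, a quasi-order `≤` on it, and an approximation
function `r : ℕ × R → AR` with range `AR`, together with a finitization quasi-order
`≤_fin` on `AR`. -/
structure RSpace where
  R : Type
  AR : Type
  le : R → R → Prop
  le_refl : ∀ A, le A A
  le_trans : ∀ A B C, le A B → le B C → le A C
  r : ℕ → R → AR
  lefin : AR → AR → Prop
  lefin_refl : ∀ a, lefin a a
  lefin_trans : ∀ a b c, lefin a b → lefin b c → lefin a c
  r_surj : ∀ a : AR, ∃ n A, r n A = a

namespace RSpace

variable (S : RSpace)

/-- The Ellentuck neighborhood `[a, A] = {B ≤ A : ∃ n, r_n(B) = a}`. -/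
def nbhd (a : S.AR) (A : S.R) : Set S.R := {B | S.le B A ∧ ∃ n, S.r n B = a}

/-- `AR(A) = {a ∈ AR : [a, A] ≠ ∅}`. -/
def ARof (A : S.R) : Set S.AR := {a | (S.nbhd a A).Nonempty}

/-- `depth_A(a) = n`: `n` is least with `a ≤_fin r_n(A)`. -/
def IsDepth (A : S.R) (a : S.AR) (n : ℕ) : Prop :=
  S.lefin a (S.r n A) ∧ ∀ i < n, ¬ S.lefin a (S.r i A)

/-- (A.1) `r_0(A) = ∅` for all `A`. -/
def A1 : Prop := ∀ A B, S.r 0 A = S.r 0 B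

/-- (A.2) distinct elements have some distinct approximation. -/
def A2 : Prop := ∀ A B, A ≠ B → ∃ n, S.r n A ≠ S.r n B

/-- (A.3) `r_n(A) = r_m(B)` implies `n = m` and `r_i(A) = r_i(B)` for all `i < n`. -/
def A3 : Prop := ∀ A B n m, S.r n A = S.r m B → n = m ∧ ∀ i < n, S.r i A = S.r i B

/-- (A.4)(i) finitization: `A ≤ B` iff every approximation of `A` is `≤_fin` some
approximation of `B`. -/
def A4i : Prop := ∀ A B, S.le A B ↔ ∀ n, ∃ m, S.lefin (S.r n A) (S.r m B)

/-- (A.4)(ii) each `≤_fin`-downward cone is finite. -/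
def A4ii : Prop := ∀ a : S.AR, {b | S.lefin b a}.Finite

/-- (A.5) amalgamation. -/
def A5 : Prop := ∀ (a : S.AR) (A : S.R) (n : ℕ), S.IsDepth A a n →
  (∀ B ∈ S.nbhd (S.r n A) A, (S.nbhd a B).Nonempty) ∧
  (∀ B ∈ S.nbhd a A, ∃ A' ∈ S.nbhd (S.r n A) A, S.nbhd a A' ⊆ S.nbhd a B)

/-- (A.6) abstract pigeonhole: if `depth_A(a) = n` and `|a| = l`, then for every
`O ⊆ AR` there is `B ∈ [n, A]` with `r_{l+1}[a, B] ⊆ O` or `r_{l+1}[a, B] ⊆ Oᶜ`. -/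
def A6 : Prop := ∀ (a : S.AR) (A : S.R) (n l : ℕ), S.IsDepth A a n →
  (∃ C, S.r l C = a) →
  ∀ O : Set S.AR, ∃ B ∈ S.nbhd (S.r n A) A,
    (∀ b : S.AR, (∃ C ∈ S.nbhd a B, S.r (l + 1) C = b) → b ∈ O) ∨
    (∀ b : S.AR, (∃ C ∈ S.nbhd a B, S.r (l + 1) C = b) → b ∉ O)

/-- `R` is metrically closed as a subspace of `AR^ℕ` (identifying each `A ∈ R` with its
sequence of approximations): every sequence of approximations all of whose initial
segments come from elements of `R` is itself the approximation sequence of an element. -/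
def MetricallyClosed : Prop :=
  ∀ f : ℕ → S.AR, (∀ n, ∃ A, ∀ i ≤ n, S.r i A = f i) → ∃ A, ∀ n, S.r n A = f n

/-- `(R, ≤, r)` is metrically closed and satisfies axioms (A.1)–(A.6). -/
def Axioms : Prop :=
  S.A1 ∧ S.A2 ∧ S.A3 ∧ S.A4i ∧ S.A4ii ∧ S.A5 ∧ S.A6 ∧ S.MetricallyClosed

end RSpace

/-!
Galvin's lemma by the combinatorial forcing argument. Say `B` accepts `a` if every `C ∈ [a, B]`
has an approximation in `F`, and rejects `a` if no `B' ≤ B` with `[a, B'] ≠ ∅` accepts it.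
Amalgamation (A.5) lets us decide each `a` of depth `k` by shrinking inside `[k, C]`; there are
finitely many such `a` (A.4), so a fusion sequence `C₀ ≥ C₁ ≥ ⋯` with `r_k(C_{k+1}) = r_k(C_k)`
converges (metric closedness) to some `B` deciding every `a ∈ AR(B)`. If `B` accepts `∅` we are
done. Otherwise the pigeonhole principle (A.6), applied to the set of accepted approximations,
shows that a rejected `a` can be kept rejected on all one-step extensions; a second fusion makes
this hold for all `a` at once, and then by induction on length every approximation of the final
`C ≤ B` is rejected, so in particular none lies in `F`.
-/

namespace RSpace

lemma IsDepth.congr {S : RSpace} {a : S.AR} {A B : S.R} {n : ℕ} (hd : S.IsDepth A a n)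
    (h : ∀ i ≤ n, S.r i A = S.r i B) : S.IsDepth B a n :=
  ⟨h n le_rfl ▸ hd.1, fun i hi => h i hi.le ▸ hd.2 i hi⟩

variable (S : RSpace)

lemma nbhd_mono {a : S.AR} {B C : S.R} (h : S.le C B) : S.nbhd a C ⊆ S.nbhd a B :=
  fun _ hD => ⟨S.le_trans _ _ _ hD.1 h, hD.2⟩

lemma self_mem_nbhd (C : S.R) (n : ℕ) : C ∈ S.nbhd (S.r n C) C :=
  ⟨S.le_refl C, n, rfl⟩

lemma r_zero_mem_ARof (B : S.R) : S.r 0 B ∈ S.ARof B :=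
  ⟨B, S.self_mem_nbhd B 0⟩

lemma r_eq_of_r_eq (h3 : S.A3) {C D : S.R} {k : ℕ} (h : S.r k D = S.r k C) :
    ∀ i ≤ k, S.r i D = S.r i C := by
  intro i hi
  rcases hi.eq_or_lt with rfl | hlt
  · exact h
  · exact (h3 D C k k h).2 i hlt

lemma le_and_r_eq_of_mem_nbhd (h3 : S.A3) {C D : S.R} {k : ℕ}
    (h : D ∈ S.nbhd (S.r k C) C) : S.le D C ∧ S.r k D = S.r k C := by
  obtain ⟨hle, m, hm⟩ := h
  obtain ⟨rfl, -⟩ := h3 D C m k hm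
  exact ⟨hle, hm⟩

lemma exists_lefin_of_mem_ARof (h4i : S.A4i) {a : S.AR} {B : S.R} (ha : a ∈ S.ARof B) :
    ∃ m, S.lefin a (S.r m B) := by
  obtain ⟨C, hCB, l, rfl⟩ := ha
  exact (h4i C B).mp hCB l

lemma exists_isDepth {a : S.AR} {A : S.R} (h : ∃ m, S.lefin a (S.r m A)) :
    ∃ n, S.IsDepth A a n := by
  classical
  exact ⟨Nat.find h, Nat.find_spec h, fun i hi => Nat.find_min h hi⟩

section Fusion

lemma exists_shrink_forall_mem (P : S.R → S.AR → Prop)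
    (hP : ∀ D D' a, S.le D' D → P D a → P D' a) (k : ℕ) (C : S.R) {s : Set S.AR}
    (hs : s.Finite)
    (step : ∀ a ∈ s, ∀ D, S.le D C → S.r k D = S.r k C →
      ∃ D', S.le D' D ∧ S.r k D' = S.r k D ∧ P D' a) :
    ∃ D, S.le D C ∧ S.r k D = S.r k C ∧ ∀ a ∈ s, P D a := by
  induction s, hs using Set.Finite.induction_on with
  | empty => exact ⟨C, S.le_refl C, rfl, fun _ h => h.elim⟩
  | @insert a t _ _ ih =>
    obtain ⟨D, hDC, hDr, hPD⟩ := ih fun b hb => step b (Set.mem_insert_of_mem a hb)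
    obtain ⟨D', hD'D, hD'r, hPa⟩ := step a (Set.mem_insert a t) D hDC hDr
    refine ⟨D', S.le_trans _ _ _ hD'D hDC, hD'r.trans hDr, ?_⟩
    rintro b (rfl | hb)
    · exact hPa
    · exact hP D D' b hD'D (hPD b hb)

lemma exists_fusion_limit (h3 : S.A3) (h4i : S.A4i) (hMC : S.MetricallyClosed)
    (f : ℕ → S.R) (hle : ∀ k, S.le (f (k + 1)) (f k))
    (hr : ∀ k, S.r k (f (k + 1)) = S.r k (f k)) :
    ∃ B, ∀ k, S.le B (f k) ∧ ∀ i ≤ k, S.r i B = S.r i (f k) := by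
  have agree : ∀ i k, i ≤ k → S.r i (f k) = S.r i (f i) := by
    intro i k hik
    induction k, hik using Nat.le_induction with
    | base => rfl
    | succ k hik ih => exact (S.r_eq_of_r_eq h3 (hr k) i hik).trans ih
  have antitone : ∀ k j, k ≤ j → S.le (f j) (f k) := by
    intro k j hkj
    induction j, hkj using Nat.le_induction with
    | base => exact S.le_refl _
    | succ j _ ih => exact S.le_trans _ _ _ (hle j) ih
  obtain ⟨B, hB⟩ := hMC (fun n => S.r n (f n)) fun n => ⟨f n, fun i hi => agree i n hi⟩
  refine ⟨B, fun k => ⟨(h4i B (f k)).mpr fun n => ?_, fun i hi => ?_⟩⟩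
  · rw [hB n, ← agree n (max n k) (le_max_left n k)]
    exact (h4i _ _).mp (antitone k _ (le_max_right n k)) n
  · rw [hB i, agree i k hi]

lemma exists_le_forall_lefin (h3 : S.A3) (h4i : S.A4i) (h4ii : S.A4ii)
    (hMC : S.MetricallyClosed) (P : S.R → S.AR → Prop)
    (hP : ∀ D D' a, S.le D' D → P D a → P D' a) (A : S.R)
    (step : ∀ a C k, S.le C A → S.IsDepth C a k → ∃ D ∈ S.nbhd (S.r k C) C, P D a) :
    ∃ B, S.le B A ∧ ∀ a m, S.lefin a (S.r m B) → P B a := by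
  have stage : ∀ k C, ∃ D, S.le D C ∧ S.r k D = S.r k C ∧
      (S.le C A → ∀ a, S.IsDepth C a k → P D a) := by
    intro k C
    by_cases hCA : S.le C A
    · obtain ⟨D, hDC, hDr, hPD⟩ := S.exists_shrink_forall_mem P hP k C
        ((h4ii (S.r k C)).subset fun a (ha : S.IsDepth C a k) => ha.1)
        fun a (ha : S.IsDepth C a k) D hDC hDr => by
          obtain ⟨D', hD', hPa⟩ :=
            step a D k (S.le_trans _ _ _ hDC hCA) (ha.congr (S.r_eq_of_r_eq h3 hDr.symm))
          obtain ⟨hD'D, hD'r⟩ := S.le_and_r_eq_of_mem_nbhd h3 hD'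
          exact ⟨D', hD'D, hD'r, hPa⟩
      exact ⟨D, hDC, hDr, fun _ a ha => hPD a ha⟩
    · exact ⟨C, S.le_refl C, rfl, fun h => absurd h hCA⟩
  choose g hgle hgr hgP using stage
  let f : ℕ → S.R := fun k => Nat.rec A (fun k C => g k C) k
  have hfA : ∀ k, S.le (f k) A := by
    intro k
    induction k with
    | zero => exact S.le_refl A
    | succ k ih => exact S.le_trans _ _ _ (hgle k (f k)) ih
  obtain ⟨B, hB⟩ := S.exists_fusion_limit h3 h4i hMC f (fun k => hgle k (f k))
    (fun k => hgr k (f k))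
  refine ⟨B, (hB 0).1, fun a m ham => ?_⟩
  obtain ⟨n, hn⟩ := S.exists_isDepth ⟨m, ham⟩
  exact hP _ B a (hB (n + 1)).1 (hgP n (f n) (hfA n) a (hn.congr (hB n).2))

end Fusion

section Forcing

variable (F : Set S.AR)

def Accepts (B : S.R) (a : S.AR) : Prop :=
  ∀ C ∈ S.nbhd a B, ∃ n, S.r n C ∈ F

def Rejects (B : S.R) (a : S.AR) : Prop :=
  ∀ B', S.le B' B → (S.nbhd a B').Nonempty → ¬ S.Accepts F B' a

def Decides (B : S.R) (a : S.AR) : Prop :=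
  S.Accepts F B a ∨ S.Rejects F B a

def PropagatesRejection (B D : S.R) (a : S.AR) : Prop :=
  S.Rejects F B a → ∀ C ∈ S.nbhd a D, ∀ l, S.r l C = a → S.Rejects F B (S.r (l + 1) C)

variable {S F}

lemma Decides.mono {a : S.AR} {B C : S.R} (h : S.Decides F B a) (hCB : S.le C B) :
    S.Decides F C a :=
  h.imp (fun hacc D hD => hacc D (S.nbhd_mono hCB hD))
    (fun hrej B' hB' => hrej B' (S.le_trans _ _ _ hB' hCB))

lemma PropagatesRejection.mono {a : S.AR} {B D D' : S.R} (h : S.PropagatesRejection F B D a)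
    (hD : S.le D' D) : S.PropagatesRejection F B D' a :=
  fun hrej C hC => h hrej C (S.nbhd_mono hD hC)

variable (S F)

lemma exists_decides_of_isDepth (h5 : S.A5) {a : S.AR} {C : S.R} {n : ℕ}
    (hd : S.IsDepth C a n) : ∃ D ∈ S.nbhd (S.r n C) C, S.Decides F D a := by
  by_cases h : ∃ B', S.le B' C ∧ (S.nbhd a B').Nonempty ∧ S.Accepts F B' a
  · obtain ⟨B', hB'C, ⟨E, hE⟩, hacc⟩ := h
    obtain ⟨A', hA', hsub⟩ := (h5 a C n hd).2 E (S.nbhd_mono hB'C hE)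
    exact ⟨A', hA', Or.inl fun C' hC' => hacc C' (S.nbhd_mono hE.1 (hsub hC'))⟩
  · push Not at h
    exact ⟨C, S.self_mem_nbhd C n, Or.inr h⟩

lemma exists_propagatesRejection (h3 : S.A3) (h5 : S.A5) (h6 : S.A6) {B C : S.R}
    (hdec : ∀ b ∈ S.ARof B, S.Decides F B b) (hCB : S.le C B) {a : S.AR} {n : ℕ}
    (hd : S.IsDepth C a n) : ∃ D ∈ S.nbhd (S.r n C) C, S.PropagatesRejection F B D a := by
  obtain ⟨l, E, hEl⟩ := S.r_surj a
  obtain ⟨D, hD, hcases⟩ := h6 a C n l hd ⟨E, hEl⟩ {b | S.Accepts F B b}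
  have hDB : S.le D B := S.le_trans _ _ _ hD.1 hCB
  rcases hcases with hpos | hneg
  · refine ⟨D, hD, fun hrej => absurd ?_ (hrej D hDB ((h5 a C n hd).1 D hD))⟩
    exact fun C' hC' => hpos _ ⟨C', hC', rfl⟩ C' ⟨S.le_trans _ _ _ hC'.1 hDB, _, rfl⟩
  · refine ⟨D, hD, fun _ C' hC' l' hl' => ?_⟩
    obtain ⟨rfl, -⟩ := h3 C' E l' l (hl'.trans hEl.symm)
    have hmem : S.r (l' + 1) C' ∈ S.ARof B := ⟨C', S.le_trans _ _ _ hC'.1 hDB, l' + 1, rfl⟩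
    exact (hdec _ hmem).resolve_left (hneg _ ⟨C', hC', rfl⟩)

lemma forall_notMem_of_rejects (h1 : S.A1) (h4i : S.A4i) {B C : S.R}
    (h0 : S.Rejects F B (S.r 0 B))
    (hprop : ∀ a m, S.lefin a (S.r m C) → S.PropagatesRejection F B C a) (hCB : S.le C B) :
    ∀ a ∈ S.ARof C, a ∉ F := by
  have hrej : ∀ l D, S.le D C → S.Rejects F B (S.r l D) := by
    intro l
    induction l with
    | zero => intro D _; rwa [h1 D B]
    | succ l ih =>
      intro D hDC
      obtain ⟨m, hm⟩ := (h4i D C).mp hDC l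
      exact hprop _ m hm (ih D hDC) D ⟨hDC, l, rfl⟩ l rfl
  rintro a ⟨D, hDC, l, rfl⟩ haF
  exact hrej l D hDC C hCB ⟨D, hDC, l, rfl⟩ fun _ ⟨_, n, hn⟩ => ⟨n, hn ▸ haF⟩

end Forcing

end RSpace

/-- Abstract version of Galvin's lemma. -/
theorem abstract_galvin (S : RSpace) (hS : S.Axioms) (F : Set S.AR) (A : S.R) :
    ∃ B : S.R, S.le B A ∧
      ((∀ a ∈ S.ARof B, a ∉ F) ∨ (∀ C : S.R, S.le C B → ∃ n, S.r n C ∈ F)) := by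
  obtain ⟨h1, -, h3, h4i, h4ii, h5, h6, hMC⟩ := hS
  obtain ⟨B, hBA, hdec⟩ := S.exists_le_forall_lefin h3 h4i h4ii hMC (S.Decides F)
    (fun _ _ _ hD h => h.mono hD) A fun _ _ _ _ hd => S.exists_decides_of_isDepth F h5 hd
  have hdecB : ∀ b ∈ S.ARof B, S.Decides F B b := fun b hb =>
    (S.exists_lefin_of_mem_ARof h4i hb).elim (hdec b)
  rcases hdecB _ (S.r_zero_mem_ARof B) with hacc | hrej
  · exact ⟨B, hBA, Or.inr fun C hC => hacc C ⟨hC, 0, h1 C B⟩⟩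
  obtain ⟨C, hCB, hprop⟩ := S.exists_le_forall_lefin h3 h4i h4ii hMC
    (S.PropagatesRejection F B) (fun _ _ _ hD h => h.mono hD) B
    fun _ _ _ hCB hd => S.exists_propagatesRejection F h3 h5 h6 hdecB hCB hd
  exact ⟨C, S.le_trans _ _ _ hCB hBA,
    Or.inl (S.forall_notMem_of_rejects F h1 h4i hrej hprop hCB)⟩
end
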